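/- arXiv:math/9402213 — 5 statements merged into one kernel-verified Lean document; each statement's English description precedes it below -/
import Mathlib

section
/- Let λ be an uncountable cardinal, G a graph on λ⁺ with chromatic number λ⁺. Then there exists a function f : λ⁺ → λ⁺ such that for every closed unbounded set C ⊆ λ⁺, the induced subgraph of G on the set ⋃{[α, f(α)] : α ∈ C} has chromatic number λ⁺. -/
/-!
If no such `f` existed, every `f : λ⁺ → λ⁺` would have a club `C_f` such that `G` is
`λ`-colorable on `⋃ α ∈ C_f, [α, f α]`. Iterate: `f₀ = id`, `D₀ = C_{f₀}`, `f_{n+1} α` is the next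
point of `D_n` above `f_n α`, and `D_{n+1} = D_n ∩ C_{f_{n+1}}`. Since `cf λ⁺ > ℵ₀`, the set
`C = ⋂ D_n` is club and `F α = sup_n f_n α` maps `C` into `C` strictly above `α`. For `x ≥ min C`
put `α = sup (C ∩ [0, x])`: then `α ∈ C` and `F α ∈ C` force `x < F α`, so `x ∈ [α, f_n α]` for
some `n`, with `α ∈ C_{f_n}`. Thus `λ⁺` is the union of the segment below `min C`, of size `≤ λ`,
and countably many `λ`-colorable sets, hence `λ`-colorable, a contradiction.
-/

open Cardinal Ordinal Set

/-- `G` admits a proper coloring of the vertices in `S` using at most `μ` colors. -/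
def ColorableOn (G : SimpleGraph Ordinal) (S : Set Ordinal) (μ : Cardinal) : Prop :=
  ∃ c : Ordinal → Ordinal, (∀ x ∈ S, c x < μ.ord) ∧
    ∀ x ∈ S, ∀ y ∈ S, G.Adj x y → c x ≠ c y

def IsClubIn (C : Set Ordinal) (κ : Ordinal) : Prop :=
  C ⊆ Set.Iio κ ∧ (∀ x < κ, ∃ y ∈ C, x < y) ∧
    ∀ s ⊆ C, s.Nonempty → sSup s < κ → sSup s ∈ C

universe u v w

theorem isLUB_image_val_Iio_iff {κ : Ordinal} {d : Set (Iio κ)} {a : Iio κ} :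
    IsLUB (Subtype.val '' d) a.1 ↔ IsLUB d a := by
  constructor
  · intro h
    refine ⟨fun x hx => h.1 (mem_image_of_mem _ hx), fun b hb => h.2 ?_⟩
    rintro _ ⟨x, hx, rfl⟩
    exact hb hx
  · intro h
    refine ⟨?_, fun b hb => ?_⟩
    · rintro _ ⟨x, hx, rfl⟩
      exact h.1 hx
    · rcases lt_or_ge b κ with hbκ | hκb
      · have hb' : (⟨b, hbκ⟩ : Iio κ) ∈ upperBounds d := fun x hx => hb (mem_image_of_mem _ hx)
        exact h.2 hb'
      · exact a.2.le.trans hκb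

theorem isClubIn_iff_isClub {C : Set Ordinal} {κ : Ordinal} (hκ : Order.IsSuccLimit κ) :
    IsClubIn C κ ↔ C ⊆ Iio κ ∧ IsClub (Subtype.val ⁻¹' C : Set (Iio κ)) := by
  constructor
  · rintro ⟨hsub, hunb, hcl⟩
    refine ⟨hsub, ⟨fun d hd hne _ a ha => ?_, fun x => ?_⟩⟩
    · have hsup : sSup (Subtype.val '' d) = a.1 :=
        (isLUB_image_val_Iio_iff.2 ha).csSup_eq (hne.image _)
      have := hcl (Subtype.val '' d) (image_subset_iff.2 hd) (hne.image _) (hsup ▸ a.2)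
      rwa [hsup] at this
    · obtain ⟨y, hy, hxy⟩ := hunb x x.2
      exact ⟨⟨y, hsub hy⟩, hy, hxy.le⟩
  · rintro ⟨hsub, hclub⟩
    refine ⟨hsub, fun x hx => ?_, fun s hs hne hlt => ?_⟩
    · obtain ⟨y, hy, hxy⟩ := hclub.isCofinal ⟨Order.succ x, hκ.succ_lt hx⟩
      exact ⟨y, hy, (Order.lt_succ x).trans_le hxy⟩
    · have hs' : Subtype.val '' (Subtype.val ⁻¹' s : Set (Iio κ)) = s := by
        rw [Subtype.image_preimage_coe, inter_eq_right]
        exact hs.trans hsub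
      have hlub : IsLUB (Subtype.val ⁻¹' s : Set (Iio κ)) ⟨sSup s, hlt⟩ := by
        rw [← isLUB_image_val_Iio_iff, hs']
        exact isLUB_csSup hne ⟨κ, fun x hx => (hsub (hs hx)).le⟩
      refine hclub.isLUB_mem (fun x hx => hs hx) ?_ hlub
      rw [← hs'] at hne
      exact hne.of_image

theorem IsClubIn.iInter {ι : Sort*} [Countable ι] [Nonempty ι] {κ : Ordinal}
    (hκ : ℵ₀ < κ.cof) {C : ι → Set Ordinal} (hC : ∀ i, IsClubIn (C i) κ) :
    IsClubIn (⋂ i, C i) κ := by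
  have hlim : Order.IsSuccLimit κ := Ordinal.one_lt_cof_iff.1 (one_lt_aleph0.trans hκ)
  simp only [isClubIn_iff_isClub hlim] at hC ⊢
  refine ⟨(iInter_subset C (Classical.arbitrary ι)).trans (hC _).1, ?_⟩
  rw [preimage_iInter]
  refine IsClub.iInter_of_countable ?_ fun i => (hC i).2
  rw [Ordinal.cof_Iio, ← Ordinal.lift_cof, Ne, Cardinal.lift_eq_aleph0]
  exact hκ.ne'

theorem IsClubIn.inter {κ : Ordinal} (hκ : ℵ₀ < κ.cof) {C D : Set Ordinal}
    (hC : IsClubIn C κ) (hD : IsClubIn D κ) : IsClubIn (C ∩ D) κ := by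
  rw [inter_eq_iInter]
  exact IsClubIn.iInter hκ fun b => by cases b <;> assumption

theorem ColorableOn.mono {G : SimpleGraph Ordinal.{u}} {S T : Set Ordinal.{u}}
    {μ : Cardinal.{v}} (hT : ColorableOn G T μ) (hST : S ⊆ T) : ColorableOn G S μ :=
  let ⟨c, hlt, hne⟩ := hT
  ⟨c, fun x hx => hlt x (hST hx), fun x hx y hy => hne x (hST hx) y (hST hy)⟩

theorem colorableOn_singleton (G : SimpleGraph Ordinal.{u}) (x : Ordinal.{u}) {μ : Cardinal.{v}}
    (hμ : μ ≠ 0) : ColorableOn G {x} μ :=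
  ⟨fun _ => 0, fun _ _ => Cardinal.ord_pos.2 (pos_iff_ne_zero.2 hμ),
    fun _ hx _ hy hadj => absurd (hx.trans hy.symm) hadj.ne⟩

theorem ColorableOn.iUnion {ι : Type w} {G : SimpleGraph Ordinal.{u}} {S : ι → Set Ordinal.{u}}
    {μ : Cardinal.{v}} (hμ : ℵ₀ ≤ μ) (hι : Cardinal.lift.{v} #ι ≤ Cardinal.lift.{w} μ)
    (hS : ∀ i, ColorableOn G (S i) μ) : ColorableOn G (⋃ i, S i) μ := by
  -- colour `x` by the pair (a piece containing `x`, its colour there), coded below `μ.ord` by `e`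
  classical
  choose c hlt hne using hS
  obtain ⟨e⟩ : Nonempty (ι × Iio μ.ord ↪ Iio μ.ord) := by
    rw [← Cardinal.lift_mk_le']
    simp only [mk_prod, Cardinal.mk_Iio_ordinal, card_ord, Cardinal.lift_mul, Cardinal.lift_lift]
    refine (mul_le_max _ _).trans (max_le (max_le ?_ le_rfl) (Cardinal.aleph0_le_lift.2 hμ))
    simpa using Cardinal.lift_le.{v + 1}.2 hι
  refine ⟨fun x => if h : ∃ i, x ∈ S i then (e (h.choose, ⟨c _ x, hlt _ x h.choose_spec⟩)).1
    else 0, fun x hx => ?_, fun x hx y hy hadj hxy => ?_⟩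
  · rw [mem_iUnion] at hx
    simp only [dif_pos hx]
    exact (e _).2
  · rw [mem_iUnion] at hx hy
    simp only [dif_pos hx, dif_pos hy, SetCoe.ext_iff, e.apply_eq_iff_eq, Prod.ext_iff] at hxy
    obtain ⟨hi, hc⟩ := hxy
    have hc' := Subtype.mk.inj hc
    rw [← hi] at hc'
    exact hne _ x hx.choose_spec y (hi ▸ hy.choose_spec) hadj hc'

theorem ColorableOn.union {G : SimpleGraph Ordinal.{u}} {S T : Set Ordinal.{u}}
    {μ : Cardinal.{v}} (hμ : ℵ₀ ≤ μ) (hS : ColorableOn G S μ) (hT : ColorableOn G T μ) :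
    ColorableOn G (S ∪ T) μ := by
  rw [union_eq_iUnion]
  refine ColorableOn.iUnion hμ ?_ fun b => by cases b <;> assumption
  simpa using ofNat_le_aleph0.trans hμ

theorem colorableOn_of_mk_le {G : SimpleGraph Ordinal.{u}} {S : Set Ordinal.{u}}
    {μ : Cardinal.{v}} (hμ : ℵ₀ ≤ μ) (hS : Cardinal.lift.{v} #S ≤ Cardinal.lift.{u + 1} μ) :
    ColorableOn G S μ := by
  rw [← iUnion_of_singleton_coe S]
  exact ColorableOn.iUnion hμ hS fun x => colorableOn_singleton G x (aleph0_pos.trans_le hμ).ne'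

noncomputable def nextIn (S : Set Ordinal) (b : Ordinal) : Ordinal :=
  sInf {y ∈ S | b < y}

theorem IsClubIn.nextIn_mem {C : Set Ordinal} {κ b : Ordinal} (hC : IsClubIn C κ) (hb : b < κ) :
    nextIn C b ∈ C ∧ b < nextIn C b :=
  csInf_mem (hC.2.1 b hb)

theorem IsClubIn.iSup_mem {C : Set Ordinal} {κ : Ordinal} (hC : IsClubIn C κ)
    {s : ℕ → Ordinal} (hs : ∀ n, s n ∈ C) (hlt : ⨆ n, s n < κ) : ⨆ n, s n ∈ C :=
  hC.2.2 _ (range_subset_iff.2 hs) (range_nonempty s) hlt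

theorem IsClubIn.Ico_subset_biUnion_Ico {C : Set Ordinal} {κ m : Ordinal} (hC : IsClubIn C κ)
    (hm : m ∈ C) {F : Ordinal → Ordinal} (hF : ∀ α ∈ C, α < F α ∧ F α ∈ C) :
    Ico m κ ⊆ ⋃ α ∈ C, Ico α (F α) := by
  rintro x ⟨hmx, hxκ⟩
  have hne : (C ∩ Iic x).Nonempty := ⟨m, hm, hmx⟩
  have hαx : sSup (C ∩ Iic x) ≤ x := csSup_le hne fun _ h => h.2
  have hαC : sSup (C ∩ Iic x) ∈ C := hC.2.2 _ inter_subset_left hne (hαx.trans_lt hxκ)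
  refine mem_biUnion hαC ⟨hαx, not_le.1 fun hFx => ?_⟩
  obtain ⟨hlt, hFC⟩ := hF _ hαC
  exact hlt.not_ge (le_csSup ⟨x, fun _ h => h.2⟩ ⟨hFC, hFx⟩)

noncomputable def clubTower (club : (Ordinal.{u} → Ordinal.{u}) → Set Ordinal.{u}) :
    ℕ → (Ordinal.{u} → Ordinal.{u}) × Set Ordinal.{u}
  | 0 => (id, club id)
  | n + 1 =>
    let g := fun α => nextIn (clubTower club n).2 ((clubTower club n).1 α)
    (g, (clubTower club n).2 ∩ club g)

section clubTower

variable {κ : Ordinal.{u}} {club : (Ordinal.{u} → Ordinal.{u}) → Set Ordinal.{u}}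

theorem clubTower_fst_lt_and_isClubIn_snd (hκ : ℵ₀ < κ.cof)
    (hclub : ∀ g, (∀ α < κ, g α < κ) → IsClubIn (club g) κ) (n : ℕ) :
    (∀ α < κ, (clubTower club n).1 α < κ) ∧ IsClubIn (clubTower club n).2 κ := by
  induction n with
  | zero => exact ⟨fun α hα => hα, hclub id fun α hα => hα⟩
  | succ n ih =>
    have hg : ∀ α < κ, (clubTower club (n + 1)).1 α < κ := fun α hα =>
      ih.2.1 (ih.2.nextIn_mem (ih.1 α hα)).1
    exact ⟨hg, ih.2.inter hκ (hclub _ hg)⟩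

theorem clubTower_snd_subset (n : ℕ) : (clubTower club n).2 ⊆ club (clubTower club n).1 := by
  cases n with
  | zero => exact subset_rfl
  | succ n => exact inter_subset_right

theorem antitone_clubTower_snd : Antitone fun n => (clubTower club n).2 :=
  antitone_nat_of_succ_le fun _ => inter_subset_left

theorem clubTower_fst_succ (hκ : ℵ₀ < κ.cof)
    (hclub : ∀ g, (∀ α < κ, g α < κ) → IsClubIn (club g) κ) {α : Ordinal} (hα : α < κ)
    (n : ℕ) : (clubTower club (n + 1)).1 α ∈ (clubTower club n).2 ∧
      (clubTower club n).1 α < (clubTower club (n + 1)).1 α :=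
  have hT := clubTower_fst_lt_and_isClubIn_snd hκ hclub n
  hT.2.nextIn_mem (hT.1 α hα)

theorem iSup_clubTower_fst_mem (hκ : ℵ₀ < κ.cof)
    (hclub : ∀ g, (∀ α < κ, g α < κ) → IsClubIn (club g) κ) {α : Ordinal} (hα : α < κ) :
    ⨆ n, (clubTower club n).1 α ∈ ⋂ n, (clubTower club n).2 := by
  have hT := clubTower_fst_lt_and_isClubIn_snd hκ hclub
  have hmono : Monotone fun n => (clubTower club n).1 α :=
    monotone_nat_of_le_succ fun n => (clubTower_fst_succ hκ hclub hα n).2.le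
  have hlt : ⨆ n, (clubTower club n).1 α < κ :=
    Ordinal.lift_iSup_lt_of_lt_cof (by simpa using hκ) fun n => (hT n).1 α hα
  refine mem_iInter.2 fun k => ?_
  rw [← hmono.ciSup_comp_tendsto_atTop Ordinal.bddAbove_of_small
    (Filter.tendsto_add_atTop_nat (k + 1))] at hlt ⊢
  exact (hT k).2.iSup_mem (fun n => antitone_clubTower_snd (Nat.le_add_left k n)
    (clubTower_fst_succ hκ hclub hα (n + k)).1) hlt

end clubTower

theorem exists_Ico_subset_iUnion_biUnion_Icc {κ : Ordinal.{u}} (hκ : ℵ₀ < κ.cof)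
    (club : (Ordinal.{u} → Ordinal.{u}) → Set Ordinal.{u})
    (hclub : ∀ g, (∀ α < κ, g α < κ) → IsClubIn (club g) κ) :
    ∃ m < κ, ∃ f : ℕ → Ordinal → Ordinal, (∀ n, ∀ α < κ, f n α < κ) ∧
      Ico m κ ⊆ ⋃ n, ⋃ α ∈ club (f n), Icc α (f n α) := by
  have hT := clubTower_fst_lt_and_isClubIn_snd hκ hclub
  have hC : IsClubIn (⋂ n, (clubTower club n).2) κ := IsClubIn.iInter hκ fun n => (hT n).2
  obtain ⟨m, hm, -⟩ := hC.2.1 0 (Ordinal.cof_pos.1 (aleph0_pos.trans hκ))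
  refine ⟨m, hC.1 hm, fun n => (clubTower club n).1, fun n => (hT n).1, ?_⟩
  refine (hC.Ico_subset_biUnion_Ico hm (F := fun α => ⨆ n, (clubTower club n).1 α)
    fun α hα => ⟨?_, iSup_clubTower_fst_mem hκ hclub (hC.1 hα)⟩).trans ?_
  · exact (clubTower_fst_succ hκ hclub (hC.1 hα) 0).2.trans_le
      (le_ciSup Ordinal.bddAbove_of_small 1)
  · intro x hx
    obtain ⟨α, hα, hαx, hxF⟩ := mem_iUnion₂.1 hx
    obtain ⟨n, hn⟩ := Ordinal.lt_iSup_iff.1 hxF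
    exact mem_iUnion.2 ⟨n, mem_biUnion (clubTower_snd_subset n (mem_iInter.1 hα n)) ⟨hαx, hn.le⟩⟩

theorem statement2_general (lam : Cardinal.{0}) (hunc : ℵ₀ < lam)
    (G : SimpleGraph Ordinal)
    (hchr : ¬ ColorableOn G (Set.Iio (Order.succ lam).ord) lam) :
    ∃ f : Ordinal → Ordinal, (∀ α < (Order.succ lam).ord, f α < (Order.succ lam).ord) ∧
      ∀ C : Set Ordinal, IsClubIn C (Order.succ lam).ord →
        ¬ ColorableOn G (⋃ α ∈ C, Set.Icc α (f α)) lam := by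
  have hcof : ℵ₀ < (Order.succ lam).ord.cof := by
    rw [(isRegular_succ hunc.le).cof_ord]
    exact hunc.trans (Order.lt_succ lam)
  by_contra! hcol
  choose! club hclub hclub_col using hcol
  obtain ⟨m, hm, f, hf, hcover⟩ := exists_Ico_subset_iUnion_biUnion_Icc hcof club hclub
  have hsplit : Iio (Order.succ lam).ord ⊆ Iio m ∪ ⋃ n, ⋃ α ∈ club (f n), Icc α (f n α) :=
    fun x hx => (lt_or_ge x m).imp id fun hmx => hcover ⟨hmx, hx⟩
  have hm_card : m.card ≤ lam := Order.lt_succ_iff.1 (lt_ord.1 hm)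
  refine hchr (ColorableOn.mono (ColorableOn.union hunc.le ?_ ?_) hsplit)
  · exact colorableOn_of_mk_le hunc.le (by simpa [← Ordinal.lift_card] using hm_card)
  · exact ColorableOn.iUnion hunc.le (by simpa using hunc.le) fun n => hclub_col _ (hf n)

/-- Let `λ` be uncountable and `G` a graph on `λ⁺` with chromatic number `λ⁺`
(i.e. `G` has no proper coloring by `λ` colors).  Then there is `f : λ⁺ → λ⁺` such that for
every club `C ⊆ λ⁺` the induced subgraph of `G` on `⋃ {[α, f α] : α ∈ C}` has chromatic
number `λ⁺`. -/
theorem statement2 (lam : Cardinal.{0}) (hunc : ℵ₀ < lam)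
    (G : SimpleGraph Ordinal)
    (hG : ∀ a b, G.Adj a b → a < (Order.succ lam).ord ∧ b < (Order.succ lam).ord)
    (hchr : ¬ ColorableOn G (Set.Iio (Order.succ lam).ord) lam) :
    ∃ f : Ordinal → Ordinal, (∀ α < (Order.succ lam).ord, f α < (Order.succ lam).ord) ∧
      ∀ C : Set Ordinal, IsClubIn C (Order.succ lam).ord →
        ¬ ColorableOn G (⋃ α ∈ C, Set.Icc α (f α)) lam :=
  statement2_general lam hunc G hchr
end

section
/- Let λ be an infinite cardinal and suppose f_n : λ⁺ → λ⁺ (n < ω) and club sets C_n ⊆ λ⁺ (n < ω) satisfy f_{n+1}(α) = min(C_n \ (α+1)) for all α and n. If γ < λ⁺ satisfies γ ∉ ⋃{[α, f_n(α)] : α ∈ C_n, n < ω} and γ > min(⋂_{n<ω} C_n), then setting α_n = max(γ ∩ C_n) (the largest element of C_n below γ) yields α_{n+1} < α_n for all n < ω, which is a contradiction; hence no such γ exists. -/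
open Cardinal Ordinal Set

/-- Let `λ` be infinite, `f_n : λ⁺ → λ⁺` and clubs `C_n ⊆ λ⁺` satisfy
`f_{n+1}(α) = min (C_n \ (α+1))` (the least element of `C_n` above `α`).  Then there is
no ordinal `γ < λ⁺` with `γ > min (⋂ₙ Cₙ)` and
`γ ∉ ⋃ {[α, f_n α] : α ∈ C_n, n < ω}`. -/
theorem statement4 (lam : Cardinal.{0}) (hinf : ℵ₀ ≤ lam)
    (f : ℕ → Ordinal → Ordinal) (C : ℕ → Set Ordinal)
    (hclub : ∀ n, IsClubIn (C n) (Order.succ lam).ord)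
    (hrec : ∀ n α, α < (Order.succ lam).ord →
      f (n + 1) α = sInf (C n ∩ Set.Ioi α)) :
    ¬ ∃ γ < (Order.succ lam).ord, sInf (⋂ n, C n) < γ ∧
        γ ∉ ⋃ n, ⋃ α ∈ C n, Set.Icc α (f n α) := by
  set κ := (Order.succ lam).ord with hκ
  rintro ⟨γ, hγκ, hγinf, hγU⟩
  have hcof : κ.cof = Order.succ lam := (Cardinal.isRegular_succ hinf).cof_eq
  have hωcof : (#ℕ : Cardinal) < κ.cof := by
    rw [hcof, Cardinal.mk_nat]
    exact lt_of_le_of_lt hinf (Order.lt_succ _)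
  -- unboundedness gives nonemptiness of C n beyond any x < κ
  have hub : ∀ n x, x < κ → (C n ∩ Set.Ioi x).Nonempty := by
    intro n x hx
    obtain ⟨y, hy, hxy⟩ := (hclub n).2.1 x hx
    exact ⟨y, hy, hxy⟩
  have hmem : ∀ n x, x < κ → sInf (C n ∩ Set.Ioi x) ∈ C n ∩ Set.Ioi x :=
    fun n x hx => csInf_mem (hub n x hx)
  -- the countable intersection of the clubs is nonempty
  have hInter : (⋂ n, C n).Nonempty := by
    set x : ℕ → Ordinal := fun k =>
      Nat.rec 0 (fun _ xk => ⨆ n, sInf (C n ∩ Set.Ioi xk)) k with hx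
    have hx0 : x 0 = 0 := rfl
    have hxs : ∀ k, x (k + 1) = ⨆ n, sInf (C n ∩ Set.Ioi (x k)) := fun k => rfl
    have hxκ : ∀ k, x k < κ := by
      intro k
      induction k with
      | zero =>
        rw [hx0]
        have hωκ : (Ordinal.omega0 : Ordinal) ≤ κ := by
          rw [hκ, ← Cardinal.ord_aleph0]
          exact Cardinal.ord_le_ord.mpr (hinf.trans (Order.le_succ _))
        exact lt_of_lt_of_le Ordinal.omega0_pos hωκ
      | succ k ih =>
        rw [hxs]
        exact Ordinal.iSup_lt_ord hωcof fun n => (hclub n).1 (hmem n (x k) ih).1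
    have hxmono : ∀ k, x k < x (k + 1) := by
      intro k
      rw [hxs]
      calc x k < sInf (C 0 ∩ Set.Ioi (x k)) := (hmem 0 (x k) (hxκ k)).2
        _ ≤ _ := Ordinal.le_iSup _ 0
    set S := ⨆ k, x k with hS
    have hSκ : S < κ := Ordinal.iSup_lt_ord hωcof hxκ
    refine ⟨S, Set.mem_iInter.2 fun n => ?_⟩
    have hsub : Set.range (fun k => sInf (C n ∩ Set.Ioi (x k))) ⊆ C n := by
      rintro _ ⟨k, rfl⟩
      exact (hmem n (x k) (hxκ k)).1
    have hsup : sSup (Set.range (fun k => sInf (C n ∩ Set.Ioi (x k)))) = S := by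
      change (⨆ k, sInf (C n ∩ Set.Ioi (x k))) = S
      apply le_antisymm
      · refine Ordinal.iSup_le fun k => ?_
        calc sInf (C n ∩ Set.Ioi (x k)) ≤ x (k + 1) := by
              rw [hxs]; exact Ordinal.le_iSup _ n
          _ ≤ S := Ordinal.le_iSup _ (k + 1)
      · refine Ordinal.iSup_le fun k => ?_
        calc x k ≤ sInf (C n ∩ Set.Ioi (x k)) := le_of_lt (hmem n (x k) (hxκ k)).2
          _ ≤ _ := Ordinal.le_iSup _ k
    have := (hclub n).2.2 _ hsub ⟨_, Set.mem_range_self 0⟩ (by rw [hsup]; exact hSκ)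
    rwa [hsup] at this
  -- each C n meets Iio γ
  have hbelow : ∀ n, (C n ∩ Set.Iio γ).Nonempty := by
    intro n
    exact ⟨sInf (⋂ n, C n), Set.mem_iInter.1 (csInf_mem hInter) n, hγinf⟩
  -- the union condition, unpacked
  have hU : ∀ n, ∀ a ∈ C n, a ≤ γ → ¬ γ ≤ f n a := by
    intro n a ha hle hge
    exact hγU (Set.mem_iUnion.2 ⟨n, Set.mem_iUnion.2 ⟨a, Set.mem_iUnion.2 ⟨ha, hle, hge⟩⟩⟩)
  -- γ is not in C (n+1)
  have hγnotC : ∀ n, γ ∉ C (n + 1) := by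
    intro n hγC
    have hf : f (n + 1) γ = sInf (C n ∩ Set.Ioi γ) := hrec n γ hγκ
    have : γ < f (n + 1) γ := by rw [hf]; exact (hmem n γ hγκ).2
    exact hU (n + 1) γ hγC le_rfl this.le
  -- α n = max of C n below γ
  set A : ℕ → Ordinal := fun n => sSup (C n ∩ Set.Iio γ) with hA
  have hbdd : ∀ n, BddAbove (C n ∩ Set.Iio γ) := fun n => ⟨γ, fun b hb => hb.2.le⟩
  have hAle : ∀ n, A n ≤ γ := fun n => csSup_le (hbelow n) fun b hb => hb.2.le
  have hAC : ∀ n, A n ∈ C n := by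
    intro n
    exact (hclub n).2.2 _ (Set.inter_subset_left) (hbelow n)
      (lt_of_le_of_lt (hAle n) hγκ)
  have hAlt : ∀ n, A (n + 1) < γ :=
    fun n => lt_of_le_of_ne (hAle (n + 1)) fun h => hγnotC n (h ▸ hAC (n + 1))
  -- descent
  have key : ∀ n, A (n + 1) < A n := by
    intro n
    have haκ : A (n + 1) < κ := (hclub (n + 1)).1 (hAC (n + 1))
    set β := sInf (C n ∩ Set.Ioi (A (n + 1))) with hβ
    have hβmem := hmem n (A (n + 1)) haκ
    have hβγ : β < γ := by
      by_contra h
      push_neg at h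
      exact hU (n + 1) (A (n + 1)) (hAC (n + 1)) (hAlt n).le
        (by rw [hrec n (A (n + 1)) haκ]; exact h)
    have : β ≤ A n := le_csSup (hbdd n) ⟨hβmem.1, hβγ⟩
    exact lt_of_lt_of_le hβmem.2 this
  -- no infinite descending sequence of ordinals
  obtain ⟨m, ⟨k, hk⟩, hmin⟩ := Ordinal.lt_wf.has_min (Set.range A) ⟨A 0, Set.mem_range_self 0⟩
  exact hmin (A (k + 1)) (Set.mem_range_self _) (hk ▸ key k)
end

section
/- Let A and B be two countable subsets of ordinals, each closed (i.e., containing the suprema of all its nonempty bounded subsets that have limit order type), such that A ∩ B is an initial segment of both A and B. Define an equivalence relation on A: for x ≤ y in A, x ∼ y iff either [x,y] ∩ B = ∅ or [x,y] ∩ B ⊇ [x,y] ∩ A, and similarly on B. Then the ordered decompositions of A and of B into equivalence classes each have finitely many classes. -/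
open Set

/-- A set of ordinals is (topologically) closed: it contains the supremum of each of its
nonempty bounded subsets. -/
def OrdClosed (A : Set Ordinal) : Prop :=
  ∀ s ⊆ A, s.Nonempty → BddAbove s → sSup s ∈ A

/-- `I` is an initial segment of `A`. -/
def InitSegOf (I A : Set Ordinal) : Prop :=
  I ⊆ A ∧ ∀ x ∈ A, ∀ y ∈ I, x ≤ y → x ∈ I

/-- The equivalence relation of Lemma 5: for `x ≤ y` in `A`, `x ∼ y` iff either
`[x,y] ∩ B = ∅` or `[x,y] ∩ B ⊇ [x,y] ∩ A` (stated symmetrically via `min`/`max`). -/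
def Sim (A B : Set Ordinal) (x y : Ordinal) : Prop :=
  Set.Icc (min x y) (max x y) ∩ B = ∅ ∨ Set.Icc (min x y) (max x y) ∩ A ⊆ B

/-!
A point of `A ∩ B` is equivalent exactly to the points of `A ∩ B`, since `A ∩ B` is an initial
segment of `A`; a point of `A \ B` is equivalent exactly to the points of `A` that it can reach
without crossing `B`. Infinitely many classes would therefore give a strictly increasing sequence
`a₀ < a₁ < ⋯` in `A \ B` with a point `bₙ ∈ B` in each `[aₙ, aₙ₊₁]`. The two sequences share their
supremum, which lies in `A` and in `B` by closedness, hence in the initial segment `A ∩ B`, and it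
lies above `a₀ ∉ B`: a contradiction.
-/

theorem Set.Infinite.exists_strictMono_seq {α : Type*} [LinearOrder α] [WellFoundedLT α]
    {s : Set α} (hs : s.Infinite) : ∃ f : ℕ → α, StrictMono f ∧ ∀ n, f n ∈ s := by
  have := hs.to_subtype
  obtain ⟨f, hf | hf⟩ := Infinite.exists_strictMono_or_strictAnti s
  · exact ⟨fun n => f n, (Subtype.strictMono_coe _).comp hf, fun n => (f n).2⟩
  · exact absurd hf (not_strictAnti_of_wellFoundedLT f)

theorem Ordinal.iSup_eq_of_interleave {a b : ℕ → Ordinal} (hab : ∀ n, a n ≤ b n)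
    (hba : ∀ n, b n ≤ a (n + 1)) : ⨆ n, a n = ⨆ n, b n :=
  le_antisymm (Ordinal.iSup_le fun n => (hab n).trans (Ordinal.le_iSup b n))
    (Ordinal.iSup_le fun n => (hba n).trans (Ordinal.le_iSup a _))

section Closed

variable {A B : Set Ordinal}

theorem OrdClosed.iSup_mem {ι : Type*} [Nonempty ι] {f : ι → Ordinal} (hA : OrdClosed A)
    (hf : ∀ i, f i ∈ A) (hbdd : BddAbove (range f)) : ⨆ i, f i ∈ A :=
  hA _ (range_subset_iff.2 hf) (range_nonempty f) hbdd

theorem OrdClosed.exists_le_mem_inter_of_infinite_separated (hA : OrdClosed A)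
    (hB : OrdClosed B) {S : Set Ordinal} (hSA : S ⊆ A) (hS : S.Infinite)
    (hsep : ∀ x ∈ S, ∀ y ∈ S, x < y → (Icc x y ∩ B).Nonempty) :
    ∃ x ∈ S, ∃ γ ∈ A ∩ B, x ≤ γ := by
  obtain ⟨a, ha_mono, haS⟩ := hS.exists_strictMono_seq
  choose b hb hbB using fun n => hsep _ (haS n) _ (haS (n + 1)) (ha_mono n.lt_succ_self)
  have hsup : ⨆ n, a n = ⨆ n, b n :=
    Ordinal.iSup_eq_of_interleave (fun n => (hb n).1) (fun n => (hb n).2)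
  refine ⟨a 0, haS 0, ⨆ n, a n, ⟨?_, ?_⟩, Ordinal.le_iSup a 0⟩
  · exact hA.iSup_mem (fun n => hSA (haS n)) Ordinal.bddAbove_of_small
  · exact hsup ▸ hB.iSup_mem hbB Ordinal.bddAbove_of_small

end Closed

section Classes

variable {A B : Set Ordinal} {x y : Ordinal}

def simClass (A B : Set Ordinal) (a : Ordinal) : Set Ordinal := {b ∈ A | Sim A B a b}

theorem sim_comm : Sim A B x y ↔ Sim A B y x := by
  simp only [Sim, min_comm, max_comm]

theorem sim_iff_disjoint (hxA : x ∈ A) (hxB : x ∉ B) : Sim A B x y ↔ Disjoint (uIcc x y) B := by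
  refine ⟨?_, fun h => Or.inl (disjoint_iff_inter_eq_empty.1 h)⟩
  rintro (h | h)
  · exact disjoint_iff_inter_eq_empty.2 h
  · exact absurd (h ⟨left_mem_uIcc, hxA⟩) hxB

theorem simClass_eq_inter (hA : InitSegOf (A ∩ B) A) (hx : x ∈ A ∩ B) :
    simClass A B x = A ∩ B := by
  ext y
  constructor
  · rintro ⟨hyA, hxy⟩
    refine ⟨hyA, by_contra fun hyB => ?_⟩
    exact ((sim_iff_disjoint hyA hyB).1 (sim_comm.1 hxy)).ne_of_mem right_mem_uIcc hx.2 rfl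
  · rintro ⟨hyA, hyB⟩
    refine ⟨hyA, Or.inr ?_⟩
    rintro c ⟨hc, hcA⟩
    have hmax : max x y ∈ A ∩ B := by
      rcases max_choice x y with h | h <;> rw [h]
      exacts [hx, ⟨hyA, hyB⟩]
    exact (hA.2 c hcA _ hmax hc.2).2

theorem simClass_subset_of_sim (hx : x ∈ A \ B) (hy : y ∈ A \ B) (hxy : Sim A B x y) :
    simClass A B x ⊆ simClass A B y := by
  rintro c ⟨hcA, hxc⟩
  refine ⟨hcA, (sim_iff_disjoint hy.1 hy.2).2 ?_⟩
  have hyx : Disjoint (uIcc y x) B := uIcc_comm x y ▸ (sim_iff_disjoint hx.1 hx.2).1 hxy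
  exact (disjoint_union_left.2 ⟨hyx, (sim_iff_disjoint hx.1 hx.2).1 hxc⟩).mono_left
    uIcc_subset_uIcc_union_uIcc

theorem simClass_eq_of_sim (hx : x ∈ A \ B) (hy : y ∈ A \ B) (hxy : Sim A B x y) :
    simClass A B x = simClass A B y :=
  (simClass_subset_of_sim hx hy hxy).antisymm (simClass_subset_of_sim hy hx (sim_comm.1 hxy))

theorem finite_simClass_image_diff (hAcl : OrdClosed A) (hBcl : OrdClosed B)
    (hA : InitSegOf (A ∩ B) A) : (simClass A B '' (A \ B)).Finite := by
  by_contra hinf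
  obtain ⟨S, hSsub, hinj, hSimg⟩ :=
    (surjOn_image (simClass A B) (A \ B)).exists_subset_injOn_image_eq
  have hsep : ∀ x ∈ S, ∀ y ∈ S, x < y → (Icc x y ∩ B).Nonempty := by
    intro x hx y hy hxy
    rw [← uIcc_of_le hxy.le]
    refine not_disjoint_iff_nonempty_inter.1 fun hdisj => hxy.ne (hinj hx hy ?_)
    exact simClass_eq_of_sim (hSsub hx) (hSsub hy)
      ((sim_iff_disjoint (hSsub hx).1 (hSsub hx).2).2 hdisj)
  obtain ⟨x, hxS, γ, hγ, hxγ⟩ := hAcl.exists_le_mem_inter_of_infinite_separated hBcl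
    (fun x hx => (hSsub hx).1) (Infinite.of_image _ (hSimg ▸ hinf)) hsep
  exact (hSsub hxS).2 (hA.2 x (hSsub hxS).1 γ hγ hxγ).2

theorem finite_simClasses (hAcl : OrdClosed A) (hBcl : OrdClosed B)
    (hA : InitSegOf (A ∩ B) A) : {s | ∃ a ∈ A, s = simClass A B a}.Finite := by
  refine ((finite_simClass_image_diff hAcl hBcl hA).insert (A ∩ B)).subset ?_
  rintro s ⟨a, haA, rfl⟩
  by_cases haB : a ∈ B
  · exact Or.inl (simClass_eq_inter hA ⟨haA, haB⟩)
  · exact Or.inr ⟨a, ⟨haA, haB⟩, rfl⟩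

end Classes

theorem statement5_general (A B : Set Ordinal)
    (hAcl : OrdClosed A) (hBcl : OrdClosed B)
    (hA : InitSegOf (A ∩ B) A) (hB : InitSegOf (A ∩ B) B) :
    {s : Set Ordinal | ∃ a ∈ A, s = {b ∈ A | Sim A B a b}}.Finite ∧
    {s : Set Ordinal | ∃ b ∈ B, s = {c ∈ B | Sim B A b c}}.Finite :=
  ⟨finite_simClasses hAcl hBcl hA, finite_simClasses hBcl hAcl (inter_comm A B ▸ hB)⟩

/-- If `A`, `B` are countable closed sets of ordinals whose intersection is an
initial segment of both, then the decomposition of `A` into `∼`-classes (and likewise of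
`B`) has only finitely many classes. -/
theorem statement5 (A B : Set Ordinal)
    (hAc : A.Countable) (hBc : B.Countable)
    (hAcl : OrdClosed A) (hBcl : OrdClosed B)
    (hA : InitSegOf (A ∩ B) A) (hB : InitSegOf (A ∩ B) B) :
    {s : Set Ordinal | ∃ a ∈ A, s = {b ∈ A | Sim A B a b}}.Finite ∧
    {s : Set Ordinal | ∃ b ∈ B, s = {c ∈ B | Sim B A b c}}.Finite :=
  statement5_general A B hAcl hBcl hA hB
end

section
/- Let λ be an infinite cardinal with λ^{ℵ₀} = λ and let C = {δ_ξ : ξ < λ⁺} be the increasing enumeration of a club subset of λ⁺. Then there is a function K : [λ⁺]^{ℵ₀} → λ such that whenever A, B are countable subsets of λ⁺ with K(A) = K(B) and there exists ξ < λ⁺ with A ∩ [δ_ξ, δ_{ξ+1}) ≠ ∅ and B ∩ [δ_ξ, δ_{ξ+1}) ≠ ∅, then A ∩ δ_{ξ+1} = B ∩ δ_{ξ+1}; in particular A ∩ B is an initial segment of both A and B. -/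
/-!
For countable `A`, the set `E(A)` of those `ξ` for which `A` meets `[δ ξ, δ (ξ + 1))` is
countable, since these intervals are disjoint. Fix an injection `f` of `λ⁺` into `2^λ` and colour
a pair `η < ζ` by `(d, f η d)`, where `d` is a point at which `f η` and `f ζ` differ: the colours
of `(x, η)` and `(η, ζ)` then differ whenever `x < η < ζ`. As `|δ (ξ + 1)| ≤ λ = λ^ℵ₀`, the
countable subsets of `δ (ξ + 1)` can be coded injectively in `λ`. Now `K A` records, for an
enumeration `ι` of `E(A)` by natural numbers, the pairs `(ι ξ, code of A ∩ δ (ξ + 1))` and the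
triples `(ι η, ι ζ, colour of (η, ζ))` for `η < ζ`; there are only `λ^ℵ₀ = λ` such records.
If `K A = K B` but some `ξ ∈ E(A) ∩ E(B)` had different indices in `A` and in `B`, comparing `ξ`
with the element of `E(A)` that carries the `B`-index of `ξ` produces `x < η < ζ` with equally
coloured pairs `(x, η)`, `(η, ζ)`. So the indices agree, and the labels give
`A ∩ δ (ξ + 1) = B ∩ δ (ξ + 1)`.
-/

open Cardinal Ordinal Set

universe u

theorem exists_injOn_of_mk_le {X T : Type u} [Nonempty T] {s : Set X} (h : #s ≤ #T) :
    ∃ f : X → T, InjOn f s :=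
  exists_injOn_iff_injective.2 <| let ⟨g⟩ := h; ⟨g, g.injective⟩

theorem mk_setOf_countable_subset_le {X : Type u} {s : Set X} {c : Cardinal.{u}}
    (hs : #s ≤ c) (hc : ℵ₀ ≤ c) (hpow : c ^ ℵ₀ = c) :
    #{t : Set X | t.Countable ∧ t ⊆ s} ≤ c :=
  calc #{t : Set X | t.Countable ∧ t ⊆ s}
      = #{t : Set X // t ⊆ s ∧ #t ≤ ℵ₀} :=
        mk_congr <| Equiv.subtypeEquivRight fun _ =>
          and_comm.trans (and_congr_right' le_aleph0_iff_set_countable.symm)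
    _ ≤ max #s ℵ₀ ^ ℵ₀ := mk_bounded_subset_le s ℵ₀
    _ ≤ c ^ ℵ₀ := power_le_power_right (max_le hs hc)
    _ = c := hpow

theorem mk_setOf_countable_le {X : Type u} {c : Cardinal.{u}}
    (hX : #X ≤ c) (hc : ℵ₀ ≤ c) (hpow : c ^ ℵ₀ = c) : #{t : Set X | t.Countable} ≤ c := by
  simpa using mk_setOf_countable_subset_le (s := univ) (by rwa [mk_univ]) hc hpow

section ShiftGraph

variable {α β γ : Type*}

def IsShiftColoring [LT α] (S : Set α) (c : α → α → γ) : Prop :=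
  ∀ ⦃x⦄, x ∈ S → ∀ ⦃η⦄, η ∈ S → ∀ ⦃ζ⦄, ζ ∈ S → x < η → η < ζ → c ζ η ≠ c η x

open Classical in
noncomputable def shiftColor [Nonempty β] (f : α → β → Bool) (ζ η : α) : β × Bool :=
  let d := epsilon fun d => f ζ d ≠ f η d
  (d, f η d)

/-- Equal colours of `(x, η)` and `(η, ζ)` would make `f η` and `f x` agree at the point
chosen to separate them. -/
theorem isShiftColoring_shiftColor [Preorder α] [Nonempty β] {S : Set α} {f : α → β → Bool}
    (hf : InjOn f S) : IsShiftColoring S (shiftColor f) := by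
  intro x hx η hη ζ _ hxη _ h
  have hd : ∃ d, f η d ≠ f x d := Function.ne_iff.1 fun h' => hxη.ne (hf hx hη h'.symm)
  simp only [shiftColor, Prod.mk.injEq] at h
  rw [h.1] at h
  exact Classical.epsilon_spec hd h.2

end ShiftGraph

section Coding

variable {α T U : Type*} {S E E' : Set α} {c : α → α → U} {ι ι' : α → ℕ}

def labelSet (E : Set α) (ι : α → ℕ) (g : α → T) : Set (ℕ × T) :=
  (fun ξ => (ι ξ, g ξ)) '' E

def edgeSet [LT α] (c : α → α → U) (E : Set α) (ι : α → ℕ) : Set (ℕ × ℕ × U) :=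
  (fun p : α × α => (ι p.1, ι p.2, c p.2 p.1)) '' {p | p.1 ∈ E ∧ p.2 ∈ E ∧ p.1 < p.2}

theorem labelSet_countable {g : α → T} (hE : E.Countable) : (labelSet E ι g).Countable :=
  hE.image _

theorem edgeSet_countable [LT α] (hE : E.Countable) : (edgeSet c E ι).Countable :=
  ((hE.prod hE).mono fun _ hp => mem_prod.2 ⟨hp.1, hp.2.1⟩).image _

variable [LinearOrder α]

theorem lt_and_eq_of_edgeSet_eq (he : edgeSet c E ι = edgeSet c E' ι') (hι' : InjOn ι' E')
    {η ζ η' ζ' : α} (hη : η ∈ E) (hζ : ζ ∈ E) (hlt : η < ζ) (hη' : η' ∈ E') (hζ' : ζ' ∈ E')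
    (hιη : ι' η' = ι η) (hιζ : ι' ζ' = ι ζ) : η' < ζ' ∧ c ζ' η' = c ζ η := by
  obtain ⟨⟨η₂, ζ₂⟩, ⟨hη₂, hζ₂, hlt₂⟩, heq⟩ : (ι η, ι ζ, c ζ η) ∈ edgeSet c E' ι' :=
    he ▸ ⟨(η, ζ), ⟨hη, hζ, hlt⟩, rfl⟩
  simp only [Prod.mk.injEq] at heq
  obtain rfl : η₂ = η' := hι' hη₂ hη' (heq.1.trans hιη.symm)
  obtain rfl : ζ₂ = ζ' := hι' hζ₂ hζ' (heq.2.1.trans hιζ.symm)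
  exact ⟨hlt₂, heq.2.2⟩

theorem index_eq_of_edgeSet_eq (hc : IsShiftColoring S c) (hE : E ⊆ S) (hE' : E' ⊆ S)
    (hι' : InjOn ι' E') (himage : ι '' E = ι' '' E') (he : edgeSet c E ι = edgeSet c E' ι')
    {ξ : α} (hξ : ξ ∈ E) (hξ' : ξ ∈ E') : ι ξ = ι' ξ := by
  by_contra hne
  obtain ⟨η, hη, hιη⟩ : ι ξ ∈ ι' '' E' := himage ▸ mem_image_of_mem ι hξ
  obtain ⟨ζ, hζ, hιζ⟩ : ι' ξ ∈ ι '' E := himage.symm ▸ mem_image_of_mem ι' hξ'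
  rcases lt_trichotomy ξ ζ with h | rfl | h
  · obtain ⟨hηξ, hcol⟩ := lt_and_eq_of_edgeSet_eq he hι' hξ hζ h hη hξ' hιη hιζ.symm
    exact hc (hE' hη) (hE hξ) (hE hζ) hηξ h hcol.symm
  · exact hne hιζ
  · obtain ⟨hξη, hcol⟩ := lt_and_eq_of_edgeSet_eq he hι' hζ hξ h hξ' hη hιζ.symm hιη
    exact hc (hE hζ) (hE hξ) (hE' hη) h hξη hcol

theorem apply_eq_of_labelSet_eq_of_edgeSet_eq {g g' : α → T} (hc : IsShiftColoring S c)
    (hE : E ⊆ S) (hE' : E' ⊆ S) (hι' : InjOn ι' E') (hl : labelSet E ι g = labelSet E' ι' g')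
    (he : edgeSet c E ι = edgeSet c E' ι') {ξ : α} (hξ : ξ ∈ E) (hξ' : ξ ∈ E') :
    g ξ = g' ξ := by
  have himage : ι '' E = ι' '' E' := by
    simpa only [labelSet, image_image] using congrArg (Prod.fst '' ·) hl
  have hιξ := index_eq_of_edgeSet_eq hc hE hE' hι' himage he hξ hξ'
  obtain ⟨ξ₁, hξ₁, heq⟩ : (ι ξ, g ξ) ∈ labelSet E' ι' g' := hl ▸ mem_image_of_mem _ hξ
  obtain ⟨hι₁, hg₁⟩ := Prod.mk.inj heq
  rw [← hg₁, hι' hξ₁ hξ' (hι₁.trans hιξ)]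

end Coding

def intervalSupport (δ : Ordinal → Ordinal) (κ : Ordinal) (A : Set Ordinal) : Set Ordinal :=
  {ζ | ζ < κ ∧ (A ∩ Ico (δ ζ) (δ (ζ + 1))).Nonempty}

section IntervalSupport

variable {δ : Ordinal.{u} → Ordinal.{u}} {κ : Ordinal.{u}}

theorem subsingleton_setOf_mem_Ico (hδ : MonotoneOn δ (Iio κ)) (a : Ordinal) :
    {ζ | ζ < κ ∧ a ∈ Ico (δ ζ) (δ (ζ + 1))}.Subsingleton := by
  suffices ∀ ⦃ζ ζ'⦄, ζ' < κ → a ∈ Ico (δ ζ) (δ (ζ + 1)) → a ∈ Ico (δ ζ') (δ (ζ' + 1)) →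
      ¬ ζ < ζ' by
    intro ζ ⟨hζ, ha⟩ ζ' ⟨hζ', ha'⟩
    exact le_antisymm (not_lt.1 (this hζ ha' ha)) (not_lt.1 (this hζ' ha ha'))
  intro ζ ζ' hζ' ha ha' h
  have hsucc : ζ + 1 ≤ ζ' := Order.add_one_le_of_lt h
  exact (ha.2.trans_le (hδ (hsucc.trans_lt hζ') hζ' hsucc)).not_ge ha'.1

theorem intervalSupport_countable (hδ : MonotoneOn δ (Iio κ)) {A : Set Ordinal}
    (hA : A.Countable) : (intervalSupport δ κ A).Countable :=
  (hA.biUnion fun a _ => (subsingleton_setOf_mem_Ico hδ a).countable).mono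
    (by rintro ζ ⟨hζ, a, haA, ha⟩; exact mem_biUnion haA ⟨hζ, ha⟩)

end IntervalSupport

theorem mk_countableCodes_le {T : Type u} (hT : ℵ₀ ≤ #T) (hpow : #T ^ ℵ₀ = #T) :
    #({t : Set (ℕ × T) | t.Countable} ×ˢ {t : Set (ℕ × ℕ × (T × Bool)) | t.Countable}) ≤ #T := by
  have h2 : (2 : Cardinal) ≤ #T := ofNat_le_aleph0.trans hT
  rw [mk_setProd, ← mul_eq_self hT]
  exact mul_le_mul' (mk_setOf_countable_le (by simp [mk_prod, hT]) hT hpow)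
    (mk_setOf_countable_le (by simp [mk_prod, mul_eq_left hT h2 two_ne_zero, hT]) hT hpow)

section IntervalCode

variable {T : Type (u + 1)}

def intervalCode (δ : Ordinal → Ordinal) (κ : Ordinal) (c : Ordinal → Ordinal → T × Bool)
    (e : Ordinal → Set Ordinal → T) (ι : Ordinal → ℕ) (A : Set Ordinal) :
    Set (ℕ × T) × Set (ℕ × ℕ × (T × Bool)) :=
  (labelSet (intervalSupport δ κ A) ι (fun ξ => e ξ (A ∩ Iio (δ (ξ + 1)))),
    edgeSet c (intervalSupport δ κ A) ι)

variable {κ : Ordinal.{u}} {δ : Ordinal.{u} → Ordinal.{u}}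

theorem inter_Iio_eq_of_intervalCode_eq {c : Ordinal → Ordinal → T × Bool}
    {e : Ordinal → Set Ordinal → T} {ι ι' : Ordinal → ℕ} {A B : Set Ordinal} {ξ : Ordinal}
    (hc : IsShiftColoring (Iio κ) c) (hι' : InjOn ι' (intervalSupport δ κ B))
    (he : InjOn (e ξ) {t | t.Countable ∧ t ⊆ Iio (δ (ξ + 1))}) (hA : A.Countable)
    (hB : B.Countable) (h : intervalCode δ κ c e ι A = intervalCode δ κ c e ι' B)
    (hξA : ξ ∈ intervalSupport δ κ A) (hξB : ξ ∈ intervalSupport δ κ B) :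
    A ∩ Iio (δ (ξ + 1)) = B ∩ Iio (δ (ξ + 1)) :=
  he ⟨hA.mono inter_subset_left, inter_subset_right⟩
    ⟨hB.mono inter_subset_left, inter_subset_right⟩ <|
    apply_eq_of_labelSet_eq_of_edgeSet_eq hc (fun _ hζ => hζ.1) (fun _ hζ => hζ.1) hι'
      (congrArg Prod.fst h) (congrArg Prod.snd h) hξA hξB

theorem exists_map_eq_imp_inter_Iio_eq (hδ : MonotoneOn δ (Iio κ)) (hT : ℵ₀ ≤ #T)
    (hpow : #T ^ ℵ₀ = #T) (hκ : #(Iio κ) ≤ 2 ^ #T) (hδT : ∀ ξ < κ, #(Iio (δ (ξ + 1))) ≤ #T) :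
    ∃ K : Set Ordinal → T, ∀ A B : Set Ordinal, A.Countable → B.Countable → K A = K B →
      ∀ ξ ∈ intervalSupport δ κ A, ξ ∈ intervalSupport δ κ B →
        A ∩ Iio (δ (ξ + 1)) = B ∩ Iio (δ (ξ + 1)) := by
  classical
  have : Nonempty T := mk_ne_zero_iff.1 (aleph0_pos.trans_le hT).ne'
  obtain ⟨f, hf⟩ : ∃ f : Ordinal → T → Bool, InjOn f (Iio κ) :=
    exists_injOn_of_mk_le (by simpa [mk_arrow] using hκ)
  have hlabel : ∀ ξ, ∃ e : Set Ordinal → T,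
      ξ < κ → InjOn e {t | t.Countable ∧ t ⊆ Iio (δ (ξ + 1))} := fun ξ =>
    if hξ : ξ < κ then
      (exists_injOn_of_mk_le (mk_setOf_countable_subset_le (hδT ξ hξ) hT hpow)).imp
        fun _ he _ => he
    else ⟨fun _ => Classical.arbitrary T, fun h => absurd h hξ⟩
  choose e he using hlabel
  have hindex : ∀ A : Set Ordinal, ∃ ι : Ordinal → ℕ,
      A.Countable → InjOn ι (intervalSupport δ κ A) := fun A =>
    if hA : A.Countable then
      (countable_iff_exists_injOn.1 (intervalSupport_countable hδ hA)).imp fun _ hι _ => hι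
    else ⟨fun _ => 0, fun h => absurd h hA⟩
  choose ι hι using hindex
  let code (A : Set Ordinal) := intervalCode δ κ (shiftColor f) e (ι A) A
  have hcode : ∀ A : Set Ordinal, A.Countable →
      code A ∈ {t | t.Countable} ×ˢ {t | t.Countable} := fun A hA =>
    ⟨labelSet_countable (intervalSupport_countable hδ hA),
      edgeSet_countable (intervalSupport_countable hδ hA)⟩
  obtain ⟨G, hG⟩ := exists_injOn_of_mk_le (mk_countableCodes_le hT hpow)
  exact ⟨G ∘ code, fun A B hA hB hAB ξ hξA hξB =>
    inter_Iio_eq_of_intervalCode_eq (isShiftColoring_shiftColor hf) (hι B hB) (he ξ hξA.1) hA hB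
      (hG (hcode A hA) (hcode B hB) hAB) hξA hξB⟩

end IntervalCode

theorem statement7_general (lam : Cardinal.{0}) (hinf : ℵ₀ ≤ lam) (hpow : lam ^ ℵ₀ = lam)
    (δ : Ordinal → Ordinal)
    (hmono : StrictMonoOn δ (Set.Iio (Order.succ lam).ord))
    (hmaps : ∀ ξ < (Order.succ lam).ord, δ ξ < (Order.succ lam).ord) :
    ∃ K : Set Ordinal → Ordinal,
      (∀ A ⊆ Set.Iio (Order.succ lam).ord, A.Countable → A.Infinite → K A < lam.ord) ∧
      ∀ A B, A ⊆ Set.Iio (Order.succ lam).ord → B ⊆ Set.Iio (Order.succ lam).ord →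
        A.Countable → A.Infinite → B.Countable → B.Infinite → K A = K B →
        ∀ ξ < (Order.succ lam).ord,
          (A ∩ Set.Ico (δ ξ) (δ (ξ + 1))).Nonempty →
          (B ∩ Set.Ico (δ ξ) (δ (ξ + 1))).Nonempty →
          A ∩ Set.Iio (δ (ξ + 1)) = B ∩ Set.Iio (δ (ξ + 1)) := by
  have hκ : Order.IsSuccLimit (Order.succ lam).ord :=
    isSuccLimit_ord (hinf.trans (Order.le_succ lam))
  have hT : #(Iio lam.ord) = lift lam := by rw [Cardinal.mk_Iio_ordinal, card_ord]
  obtain ⟨K, hK⟩ := exists_map_eq_imp_inter_Iio_eq (T := Iio lam.ord) hmono.monotoneOn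
    (by rw [hT]; exact aleph0_le_lift.2 hinf)
    (by rw [hT, ← lift_aleph0.{1, 0}, ← lift_power, hpow])
    (by rw [hT, Cardinal.mk_Iio_ordinal, card_ord, ← lift_two_power, Cardinal.lift_le]
        exact Order.succ_le_of_lt (cantor lam))
    (fun ξ hξ => by
      rw [hT, Cardinal.mk_Iio_ordinal, Cardinal.lift_le, ← Order.lt_succ_iff, ← lt_ord]
      exact hmaps _ (by rw [← Order.succ_eq_add_one]; exact hκ.succ_lt hξ))
  exact ⟨fun A => K A, fun A _ _ _ => (K A).2, fun A B _ _ hA _ hB _ hAB ξ hξ hAξ hBξ =>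
    hK A B hA hB (Subtype.ext hAB) ξ ⟨hξ, hAξ⟩ ⟨hξ, hBξ⟩⟩

/-- Lemma 2: Let `λ` be infinite with `λ^ℵ₀ = λ`, and let
`C = {δ_ξ : ξ < λ⁺}` be the increasing (continuous) enumeration of a club of `λ⁺`.
Then there is `K : [λ⁺]^{ℵ₀} → λ` such that whenever `A`, `B` are countably infinite
subsets of `λ⁺` with `K A = K B` which both meet some interval `[δ_ξ, δ_{ξ+1})`,
then `A ∩ δ_{ξ+1} = B ∩ δ_{ξ+1}` (so `A ∩ B` is an initial segment of both). -/
theorem statement7 (lam : Cardinal.{0}) (hinf : ℵ₀ ≤ lam) (hpow : lam ^ ℵ₀ = lam)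
    (δ : Ordinal → Ordinal)
    (hmono : StrictMonoOn δ (Set.Iio (Order.succ lam).ord))
    (hmaps : ∀ ξ < (Order.succ lam).ord, δ ξ < (Order.succ lam).ord)
    (hclub : IsClubIn (δ '' Set.Iio (Order.succ lam).ord) (Order.succ lam).ord) :
    ∃ K : Set Ordinal → Ordinal,
      (∀ A ⊆ Set.Iio (Order.succ lam).ord, A.Countable → A.Infinite → K A < lam.ord) ∧
      ∀ A B, A ⊆ Set.Iio (Order.succ lam).ord → B ⊆ Set.Iio (Order.succ lam).ord →
        A.Countable → A.Infinite → B.Countable → B.Infinite → K A = K B →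
        ∀ ξ < (Order.succ lam).ord,
          (A ∩ Set.Ico (δ ξ) (δ (ξ + 1))).Nonempty →
          (B ∩ Set.Ico (δ ξ) (δ (ξ + 1))).Nonempty →
          A ∩ Set.Iio (δ (ξ + 1)) = B ∩ Set.Iio (δ (ξ + 1)) :=
  statement7_general lam hinf hpow δ hmono hmaps
end

section
/- Let n, e and the class K^{n,e} be as defined, and let H ∈ K^{n,e}. If q₀ = (V ∪ V⁰, U⁰, X⁰, h⁰₁,...,h⁰_n) and q₁ = (V ∪ V¹, U¹, X¹, h¹₁,...,h¹_n) are two order-isomorphic conditions of the poset Q (isomorphic via the unique order isomorphism fixing V), with V < V⁰ < V¹ (every element of V below every element of V⁰, and every element of V⁰ below every element of V¹), then q₀ and q₁ are compatible in Q: their coordinatewise union is a condition. -/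
/-!
Pull a finite `s ⊆ V ∪ V⁰ ∪ V¹` back along `g⁻¹` to `s' ⊆ V ∪ V⁰` and embed `q₀` restricted
to `s'` into some `H ∈ K^{n,e}` by `f`. With `c` the image of the first point of `s'` in `V⁰`,
the union restricted to `s` embeds into the edgeless amalgamation `H +_c H`: the part in
`V ∪ V⁰` through the left copy of `H`, the part in `V ∪ V¹` through `g⁻¹` and the right copy.
The two maps agree on `V` because `f(V) < c`, and the union has no edges between `V⁰` and `V¹`,
just as `H +_c H` has none between the two copies above `c`.
-/

open Cardinal Ordinal Set

/-- A finite structure `(V, <, U, X, h₁, …, h_n)` of the kind appearing in `K^{n,e}`: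
`V` is a finite set of naturals (carrying the natural linear order), `U ⊆ V`,
`X` a set of edges on `U`, and `h i` the `i`-th selector function. -/
structure NEStruct (n : ℕ) where
  V : Finset ℕ
  U : Finset ℕ
  X : Finset (Sym2 ℕ)
  h : Fin n → ℕ → ℕ

namespace NEStruct

variable {n : ℕ}

/-- Well-formedness: `U ⊆ V`, `X` is a loopless graph on `U`, and for `x ∈ U` the values
`h 0 x < h 1 x < ⋯ < h (n-1) x = x` all lie in `V`. -/
def WF (H : NEStruct n) : Prop :=
  H.U ⊆ H.V ∧ (∀ e ∈ H.X, ∀ v ∈ e, v ∈ H.U) ∧ (∀ e ∈ H.X, ¬ e.IsDiag) ∧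
    ∀ x ∈ H.U, (∀ i, H.h i x ∈ H.V) ∧ StrictMono (fun i => H.h i x) ∧
      ∀ i : Fin n, (i : ℕ) = n - 1 → H.h i x = x

/-- `f` is an induced (order-preserving) embedding of `H` into `H'`. -/
def IndEmb (f : ℕ → ℕ) (H H' : NEStruct n) : Prop :=
  Set.MapsTo f ↑H.V ↑H'.V ∧ StrictMonoOn f ↑H.V ∧
    (∀ x ∈ H.V, (x ∈ H.U ↔ f x ∈ H'.U)) ∧
    (∀ x ∈ H.U, ∀ y ∈ H.U, (s(x, y) ∈ H.X ↔ s(f x, f y) ∈ H'.X)) ∧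
    ∀ i, ∀ x ∈ H.U, f (H.h i x) = H'.h i (f x)

/-- The canonical base structure: `V = {1, …, n}`, `U = {n}`, `X = ∅`, `h i n = i + 1`. -/
def base (n : ℕ) : NEStruct n :=
  ⟨Finset.Icc 1 n, {n}, ∅, fun i _ => (i : ℕ) + 1⟩

/-- `H` is isomorphic to the base structure. -/
def IsBase (H : NEStruct n) : Prop :=
  ∃ f, IndEmb f (base n) H ∧ H.V = (base n).V.image f

/-- `H'` is an edgeless amalgamation `H +ₓ H`: two copies of `H` glued along the part
below `x`, the parts from `x` on being ordered one after the other, with no new edges. -/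
def IsPlus (H H' : NEStruct n) (x : ℕ) : Prop :=
  x ∈ H.V ∧ ∃ f₀ f₁ : ℕ → ℕ, IndEmb f₀ H H' ∧ IndEmb f₁ H H' ∧
    H'.V = H.V.image f₀ ∪ H.V.image f₁ ∧
    (∀ y ∈ H.V, y < x → f₀ y = f₁ y) ∧
    (∀ y ∈ H.V, x ≤ y → ∀ z ∈ H.V, x ≤ z → f₀ y < f₁ z) ∧
    H'.X = H.X.image (Sym2.map f₀) ∪ H.X.image (Sym2.map f₁)

/-- `H'` is a one-edge amalgamation `H *_y H` along `e`: the two copies of `H` interlace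
according to `e` via blocks `B 0 < B 1 < ⋯ < B (2n)` (copy `ε` occupying `B 0` together
with the blocks whose index has `e`-value `ε`), the selector values of the two copies
`y₀ = f₀ y`, `y₁ = f₁ y` of `y` are the minima of the corresponding blocks, and the only
new edge is `{y₀, y₁}`. -/
def IsStar (e : Fin (2 * n) → Bool) (H H' : NEStruct n) (y : ℕ) : Prop :=
  y ∈ H.U ∧ ∃ f₀ f₁ : ℕ → ℕ, IndEmb f₀ H H' ∧ IndEmb f₁ H H' ∧
    H'.V = H.V.image f₀ ∪ H.V.image f₁ ∧
    H'.X = H.X.image (Sym2.map f₀) ∪ H.X.image (Sym2.map f₁) ∪ {s(f₀ y, f₁ y)} ∧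
    ∃ B : Fin (2 * n + 1) → Finset ℕ,
      (∀ i j : Fin (2 * n + 1), i < j → ∀ a ∈ B i, ∀ b ∈ B j, a < b) ∧
      H.V.image f₀ = B 0 ∪
        Finset.univ.biUnion (fun i : Fin (2 * n) => if e i = false then B i.succ else ∅) ∧
      H.V.image f₁ = B 0 ∪
        Finset.univ.biUnion (fun i : Fin (2 * n) => if e i = true then B i.succ else ∅) ∧
      (∀ (i : Fin n) (j : Fin (2 * n)), e j = false →
        (Finset.univ.filter (fun k : Fin (2 * n) => k < j ∧ e k = false)).card = (i : ℕ) →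
        H'.h i (f₀ y) ∈ B j.succ ∧ ∀ z ∈ B j.succ, H'.h i (f₀ y) ≤ z) ∧
      (∀ (i : Fin n) (j : Fin (2 * n)), e j = true →
        (Finset.univ.filter (fun k : Fin (2 * n) => k < j ∧ e k = true)).card = (i : ℕ) →
        H'.h i (f₁ y) ∈ B j.succ ∧ ∀ z ∈ B j.succ, H'.h i (f₁ y) ≤ z)

end NEStruct

/-- The class `K^{n,e}`: generated from the base structure by edgeless and one-edge
amalgamations (closed under isomorphic copies via the embedding-based definitions). -/
inductive InK (n : ℕ) (e : Fin (2 * n) → Bool) : NEStruct n → Prop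
  | base {H : NEStruct n} : H.IsBase → InK n e H
  | plus {H H' : NEStruct n} {x : ℕ} : InK n e H → H.IsPlus H' x → InK n e H'
  | star {H H' : NEStruct n} {y : ℕ} : InK n e H → NEStruct.IsStar e H H' y → InK n e H'

/-- A (potential) condition of the poset `Q`: a structure `(V, U, X, h₁, …, h_n)` on a
linearly ordered vertex set `α` (in the application, `α` is the type of ordinals below
`λ⁺`). -/
structure QStruct (n : ℕ) (α : Type) where
  V : Set α
  U : Set α
  X : Set (Sym2 α)
  h : Fin n → α → α

/-- The finite substructure of `q` on `s` embeds (as an induced substructure, preserving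
order, `U`, `X` and the selectors insofar as they are present in `s`) into some member of
`K^{n,e}`. -/
def FinEmbeds (n : ℕ) (e : Fin (2 * n) → Bool) {α : Type} [LinearOrder α]
    (q : QStruct n α) (s : Finset α) : Prop :=
  ∃ (H : NEStruct n) (f : α → ℕ), InK n e H ∧ StrictMonoOn f ↑s ∧
    (∀ x ∈ s, f x ∈ H.V) ∧
    (∀ x ∈ s, (x ∈ q.U ∧ ∀ i, q.h i x ∈ s) →
      f x ∈ H.U ∧ ∀ i, f (q.h i x) = H.h i (f x)) ∧
    (∀ x ∈ s, ∀ y ∈ s, (x ∈ q.U ∧ ∀ i, q.h i x ∈ s) → (y ∈ q.U ∧ ∀ i, q.h i y ∈ s) →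
      (s(x, y) ∈ q.X ↔ s(f x, f y) ∈ H.X))

/-- `q` is a condition of the poset `Q = Q_{n,e,λ}`: `V` has size `< λ`, `U ⊆ V`, `X` is a
loopless graph on `U`, `h 0 x < ⋯ < h (n-1) x = x ` lie in `V` for `x ∈ U`, and every
finite substructure of `q` is a substructure of some element of `K^{n,e}`. -/
def IsCond (n : ℕ) (e : Fin (2 * n) → Bool) (lam : Cardinal.{0}) {α : Type}
    [LinearOrder α] (q : QStruct n α) : Prop :=
  Cardinal.mk q.V < lam ∧ q.U ⊆ q.V ∧
    (∀ ed ∈ q.X, ∀ v ∈ ed, v ∈ q.U) ∧ (∀ ed ∈ q.X, ¬ ed.IsDiag) ∧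
    (∀ x ∈ q.U, (∀ i, q.h i x ∈ q.V) ∧ StrictMono (fun i => q.h i x) ∧
      ∀ i : Fin n, (i : ℕ) = n - 1 → q.h i x = x) ∧
    ∀ s : Finset α, ↑s ⊆ q.V → FinEmbeds n e q s

/-- The extension order of `Q`: `q' ≤ q` iff `q'` end-extends `q`. -/
def QLe {n : ℕ} {α : Type} (q' q : QStruct n α) : Prop :=
  q.V ⊆ q'.V ∧ q.U = q'.U ∩ q.V ∧
    q.X = {ed ∈ q'.X | ∀ v ∈ ed, v ∈ q.V} ∧
    ∀ i, ∀ x ∈ q.U, q'.h i x = q.h i x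

namespace NEStruct

variable {n : ℕ}

def SelBelow (H : NEStruct n) : Prop :=
  ∀ u ∈ H.U, u ∈ H.V → ∀ i, H.h i u ∈ H.V ∧ H.h i u ≤ u

theorem base_selBelow (n : ℕ) : (base n).SelBelow := by
  intro u hu hv i
  have := i.isLt
  simp only [base, Finset.mem_singleton, Finset.mem_Icc] at hu hv ⊢
  omega

theorem SelBelow.image {H H' : NEStruct n} {f : ℕ → ℕ} (hH : H.SelBelow) (hf : IndEmb f H H')
    {v : ℕ} (hv : v ∈ H.V) (hu : f v ∈ H'.U) (i : Fin n) :
    H'.h i (f v) ∈ H'.V ∧ H'.h i (f v) ≤ f v := by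
  obtain ⟨hmaps, hmono, hU, -, hh⟩ := hf
  have hvU := (hU v hv).2 hu
  obtain ⟨hmem, hle⟩ := hH v hvU hv i
  rw [← hh i v hvU]
  exact ⟨hmaps hmem, hmono.monotoneOn hmem hv hle⟩

theorem SelBelow.of_cover {H H' : NEStruct n} {f₀ f₁ : ℕ → ℕ} (hH : H.SelBelow)
    (h₀ : IndEmb f₀ H H') (h₁ : IndEmb f₁ H H') (hV : H'.V = H.V.image f₀ ∪ H.V.image f₁) :
    H'.SelBelow := by
  intro u hu hv
  rw [hV, Finset.mem_union, Finset.mem_image, Finset.mem_image] at hv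
  rcases hv with ⟨v, hv, rfl⟩ | ⟨v, hv, rfl⟩
  exacts [hH.image h₀ hv hu, hH.image h₁ hv hu]

end NEStruct

theorem InK.selBelow {n : ℕ} {e : Fin (2 * n) → Bool} {H : NEStruct n} (hK : InK n e H) :
    H.SelBelow := by
  induction hK with
  | base hB =>
    obtain ⟨f, hf, hV⟩ := hB
    exact (NEStruct.base_selBelow n).of_cover hf hf (by rw [hV, Finset.union_self])
  | plus _ hP ih =>
    obtain ⟨-, f₀, f₁, h₀, h₁, hV, -⟩ := hP
    exact ih.of_cover h₀ h₁ hV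
  | star _ hS ih =>
    obtain ⟨-, f₀, f₁, h₀, h₁, hV, -⟩ := hS
    exact ih.of_cover h₀ h₁ hV

namespace NEStruct

variable {n : ℕ}

/-- The right copy in `H +_c H`. Together with the left copy `(3 * ·)` it is read off
modulo `3`: below `c` the copies coincide, from `c` on the right copy is `≡ 1 [MOD 3]`
and lies above all of the left copy. -/
def amalgRight (H : NEStruct n) (c m : ℕ) : ℕ :=
  if m ∈ H.V ∧ m < c then 3 * m else 3 * (m + H.V.sup id) + 1

def amalg (H : NEStruct n) (c : ℕ) : NEStruct n where
  V := H.V.image (3 * ·) ∪ H.V.image (H.amalgRight c)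
  U := H.U.image (3 * ·) ∪ H.U.image (H.amalgRight c)
  X := H.X.image (Sym2.map (3 * ·)) ∪ H.X.image (Sym2.map (H.amalgRight c))
  h i m :=
    if m % 3 = 0 then 3 * H.h i (m / 3)
    else H.amalgRight c (H.h i ((m - 1) / 3 - H.V.sup id))

variable {H : NEStruct n} {c : ℕ}

theorem amalgRight_of_lt {m : ℕ} (hm : m ∈ H.V) (hc : m < c) : H.amalgRight c m = 3 * m :=
  if_pos ⟨hm, hc⟩

theorem amalgRight_of_not {m : ℕ} (hm : ¬(m ∈ H.V ∧ m < c)) :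
    H.amalgRight c m = 3 * (m + H.V.sup id) + 1 :=
  if_neg hm

theorem amalgRight_of_le {m : ℕ} (hc : c ≤ m) :
    H.amalgRight c m = 3 * (m + H.V.sup id) + 1 :=
  amalgRight_of_not fun h => (h.2.trans_le hc).false

theorem amalgRight_eq_three_mul {m u : ℕ} (h : H.amalgRight c m = 3 * u) :
    m ∈ H.V ∧ m < c ∧ m = u := by
  unfold amalgRight at h
  split_ifs at h with hm
  · exact ⟨hm.1, hm.2, by omega⟩
  · omega

def AmalgShape (H : NEStruct n) (φ : ℕ → ℕ) : Prop :=
  ∀ m, φ m = 3 * m ∨ φ m = 3 * (m + H.V.sup id) + 1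

theorem amalgShape_left : H.AmalgShape (3 * ·) := fun _ => Or.inl rfl

theorem amalgShape_right : H.AmalgShape (H.amalgRight c) := by
  intro m
  unfold amalgRight
  split_ifs <;> simp

theorem AmalgShape.eq_of_eq {φ ψ : ℕ → ℕ} (hφ : H.AmalgShape φ) (hψ : H.AmalgShape ψ)
    {a b : ℕ} (h : φ a = ψ b) : a = b := by
  have := hφ a
  have := hψ b
  omega

theorem AmalgShape.mem_U {φ : ℕ → ℕ} (hφ : H.AmalgShape φ) {m : ℕ}
    (h : φ m ∈ (H.amalg c).U) : m ∈ H.U := by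
  simp only [amalg, Finset.mem_union, Finset.mem_image] at h
  rcases h with ⟨a, ha, he⟩ | ⟨a, ha, he⟩
  · rwa [amalgShape_left.eq_of_eq hφ he] at ha
  · rwa [amalgShape_right.eq_of_eq hφ he] at ha

theorem AmalgShape.mem_X {φ : ℕ → ℕ} (hφ : H.AmalgShape φ) {a b : ℕ}
    (h : s(φ a, φ b) ∈ (H.amalg c).X) : s(a, b) ∈ H.X := by
  have key : ∀ ψ, H.AmalgShape ψ → ∀ ed ∈ H.X, ed.map ψ = s(φ a, φ b) → s(a, b) ∈ H.X := by
    intro ψ hψ ed hed he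
    induction ed using Sym2.inductionOn with
    | hf x y =>
      rw [Sym2.map_mk, Sym2.eq_iff] at he
      rcases he with ⟨hx, hy⟩ | ⟨hx, hy⟩
      · rwa [hψ.eq_of_eq hφ hx, hψ.eq_of_eq hφ hy] at hed
      · rwa [hψ.eq_of_eq hφ hx, hψ.eq_of_eq hφ hy, Sym2.eq_swap] at hed
  simp only [amalg, Finset.mem_union, Finset.mem_image] at h
  rcases h with ⟨ed, hed, he⟩ | ⟨ed, hed, he⟩
  exacts [key _ amalgShape_left ed hed he, key _ amalgShape_right ed hed he]

theorem amalg_h_three_mul (i : Fin n) (m : ℕ) : (H.amalg c).h i (3 * m) = 3 * H.h i m := by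
  simp [amalg]

theorem amalg_h_of_not (i : Fin n) {m : ℕ} (hm : ¬(m ∈ H.V ∧ m < c)) :
    (H.amalg c).h i (H.amalgRight c m) = H.amalgRight c (H.h i m) := by
  rw [amalgRight_of_not hm]
  simp only [amalg]
  rw [if_neg (by omega), show (3 * (m + H.V.sup id) + 1 - 1) / 3 - H.V.sup id = m by omega]

theorem indEmb_amalg_left : IndEmb (3 * ·) H (H.amalg c) := by
  refine ⟨fun m hm => ?_, fun a _ b _ h => by simpa using h, fun x _ => ⟨fun hx => ?_,
    amalgShape_left.mem_U⟩, fun x _ y _ => ⟨fun hxy => ?_, amalgShape_left.mem_X⟩,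
    fun i x _ => (amalg_h_three_mul i x).symm⟩
  · exact Finset.mem_union_left _ (Finset.mem_image_of_mem _ hm)
  · exact Finset.mem_union_left _ (Finset.mem_image_of_mem _ hx)
  · exact Finset.mem_union_left _ (Finset.mem_image_of_mem (Sym2.map (3 * ·)) hxy)

theorem indEmb_amalg_right (hH : H.SelBelow) : IndEmb (H.amalgRight c) H (H.amalg c) := by
  refine ⟨fun m hm => ?_, fun a ha b hb h => ?_, fun x _ => ⟨fun hx => ?_,
    amalgShape_right.mem_U⟩, fun x _ y _ => ⟨fun hxy => ?_, amalgShape_right.mem_X⟩,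
    fun i x hx => ?_⟩
  · exact Finset.mem_union_right _ (Finset.mem_image_of_mem _ hm)
  · have := Finset.le_sup (f := id) (Finset.mem_coe.1 ha)
    unfold amalgRight
    split_ifs <;> simp_all <;> omega
  · exact Finset.mem_union_right _ (Finset.mem_image_of_mem _ hx)
  · exact Finset.mem_union_right _ (Finset.mem_image_of_mem (Sym2.map (H.amalgRight c)) hxy)
  · by_cases hxc : x ∈ H.V ∧ x < c
    · obtain ⟨hmem, hle⟩ := hH x hx hxc.1 i
      rw [amalgRight_of_lt hxc.1 hxc.2, amalgRight_of_lt hmem (hle.trans_lt hxc.2),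
        amalg_h_three_mul]
    · rw [amalg_h_of_not i hxc]

theorem isPlus_amalg (hH : H.SelBelow) (hc : c ∈ H.V) : H.IsPlus (H.amalg c) c := by
  refine ⟨hc, _, _, indEmb_amalg_left, indEmb_amalg_right hH, rfl,
    fun y hy hyc => (amalgRight_of_lt hy hyc).symm, fun y hy _ z _ hcz => ?_, rfl⟩
  have hyN : y ≤ H.V.sup id := Finset.le_sup (f := id) hy
  rw [amalgRight_of_le hcz]
  omega

theorem amalg_X_cross {u v : ℕ} (hu : c ≤ u) (hv : c ≤ v) :
    s(3 * u, H.amalgRight c v) ∉ (H.amalg c).X := by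
  rw [amalgRight_of_le hv]
  simp only [amalg, Finset.mem_union, Finset.mem_image, not_or, not_exists, not_and]
  constructor
  · rintro ed - he
    induction ed using Sym2.inductionOn with
    | hf a b =>
      rw [Sym2.map_mk, Sym2.eq_iff] at he
      omega
  · rintro ed - he
    induction ed using Sym2.inductionOn with
    | hf a b =>
      rw [Sym2.map_mk, Sym2.eq_iff] at he
      rcases he with ⟨ha, -⟩ | ⟨-, ha⟩ <;> have := amalgRight_eq_three_mul ha <;> omega

end NEStruct

theorem InK.amalg {n : ℕ} {e : Fin (2 * n) → Bool} {H : NEStruct n} (hK : InK n e H) {c : ℕ}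
    (hc : c ∈ H.V) : InK n e (H.amalg c) :=
  InK.plus hK (NEStruct.isPlus_amalg hK.selBelow hc)

theorem apply_le_of_apply_last {β : Type*} [Preorder β] {n : ℕ} {f : Fin n → β}
    (hf : Monotone f) {x : β} (hlast : ∀ i : Fin n, (i : ℕ) = n - 1 → f i = x) (i : Fin n) :
    f i ≤ x := by
  have hi := i.isLt
  rw [← hlast ⟨n - 1, by omega⟩ rfl]
  exact hf (Fin.le_def.2 (by simp only; omega))

namespace QStruct

variable {n : ℕ} {α : Type}

structure WF [Preorder α] (q : QStruct n α) : Prop where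
  U_subset : q.U ⊆ q.V
  X_mem_U : ∀ ed ∈ q.X, ∀ v ∈ ed, v ∈ q.U
  X_not_diag : ∀ ed ∈ q.X, ¬ed.IsDiag
  sel : ∀ x ∈ q.U, (∀ i, q.h i x ∈ q.V) ∧ StrictMono (fun i => q.h i x) ∧
    ∀ i : Fin n, (i : ℕ) = n - 1 → q.h i x = x

theorem WF.X_mem_V [Preorder α] {q : QStruct n α} (hq : q.WF) : ∀ ed ∈ q.X, ∀ v ∈ ed, v ∈ q.V :=
  fun ed hed v hv => hq.U_subset (hq.X_mem_U ed hed v hv)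

open scoped Classical in
noncomputable def union (q₀ q₁ : QStruct n α) : QStruct n α :=
  ⟨q₀.V ∪ q₁.V, q₀.U ∪ q₁.U, q₀.X ∪ q₁.X, fun i x => if x ∈ q₀.U then q₀.h i x else q₁.h i x⟩

theorem WF.union [Preorder α] {q₀ q₁ : QStruct n α} (h₀ : q₀.WF) (h₁ : q₁.WF) :
    (q₀.union q₁).WF := by
  refine ⟨Set.union_subset_union h₀.U_subset h₁.U_subset, ?_, ?_, fun x hx => ?_⟩
  · rintro ed (hed | hed) v hv
    exacts [Or.inl (h₀.X_mem_U ed hed v hv), Or.inr (h₁.X_mem_U ed hed v hv)]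
  · rintro ed (hed | hed)
    exacts [h₀.X_not_diag ed hed, h₁.X_not_diag ed hed]
  · by_cases hx₀ : x ∈ q₀.U
    · obtain ⟨hmem, hmono, hlast⟩ := h₀.sel x hx₀
      simp only [QStruct.union, if_pos hx₀]
      exact ⟨fun i => Or.inl (hmem i), hmono, hlast⟩
    · obtain ⟨hmem, hmono, hlast⟩ := h₁.sel x (hx.resolve_left hx₀)
      simp only [QStruct.union, if_neg hx₀]
      exact ⟨fun i => Or.inr (hmem i), hmono, hlast⟩

theorem qLe_union_left [Preorder α] {q₀ q₁ : QStruct n α} (h₀ : q₀.WF)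
    (hU : ∀ x ∈ q₁.U, x ∈ q₀.V → x ∈ q₀.U)
    (hX : ∀ ed ∈ q₁.X, (∀ v ∈ ed, v ∈ q₀.V) → ed ∈ q₀.X) : QLe (q₀.union q₁) q₀ := by
  refine ⟨Set.subset_union_left, ?_, ?_, fun i x hx => if_pos hx⟩
  · ext x
    exact ⟨fun hx => ⟨Or.inl hx, h₀.U_subset hx⟩,
      fun ⟨hx, hxV⟩ => hx.elim id fun hx => hU x hx hxV⟩
  · ext ed
    exact ⟨fun hed => ⟨Or.inl hed, h₀.X_mem_V ed hed⟩,
      fun ⟨hed, hedV⟩ => hed.elim id fun hed => hX ed hed hedV⟩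

theorem qLe_union_right [Preorder α] {q₀ q₁ : QStruct n α} (h₁ : q₁.WF)
    (hU : ∀ x ∈ q₀.U, x ∈ q₁.V → x ∈ q₁.U)
    (hX : ∀ ed ∈ q₀.X, (∀ v ∈ ed, v ∈ q₁.V) → ed ∈ q₁.X)
    (hh : ∀ x ∈ q₀.U, x ∈ q₁.U → ∀ i, q₀.h i x = q₁.h i x) : QLe (q₀.union q₁) q₁ := by
  classical
  refine ⟨Set.subset_union_right, ?_, ?_, fun i x hx => ?_⟩
  · ext x
    exact ⟨fun hx => ⟨Or.inr hx, h₁.U_subset hx⟩,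
      fun ⟨hx, hxV⟩ => hx.elim (fun hx => hU x hx hxV) id⟩
  · ext ed
    exact ⟨fun hed => ⟨Or.inr hed, h₁.X_mem_V ed hed⟩,
      fun ⟨hed, hedV⟩ => hed.elim (fun hed => hX ed hed hedV) id⟩
  · show (if x ∈ q₀.U then q₀.h i x else q₁.h i x) = q₁.h i x
    split_ifs with hx₀
    exacts [hh x hx₀ hx i, rfl]

def SelClosed (q : QStruct n α) (s : Finset α) (x : α) : Prop :=
  x ∈ q.U ∧ ∀ i, q.h i x ∈ s

theorem SelClosed.of_qLe {q q₀ : QStruct n α} {s : Finset α} (hle : QLe q q₀) {x : α}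
    (hx : x ∈ q₀.V) (hc : q.SelClosed s x) : q₀.SelClosed s x := by
  obtain ⟨-, hU, -, hh⟩ := hle
  have hx₀ : x ∈ q₀.U := hU ▸ ⟨hc.1, hx⟩
  exact ⟨hx₀, fun i => hh i x hx₀ ▸ hc.2 i⟩

open scoped Classical in
theorem SelClosed.filter [Preorder α] {q q₀ : QStruct n α} {s : Finset α} (hle : QLe q q₀)
    (hq₀ : q₀.WF) {x : α} (hx : x ∈ q₀.V) (hc : q.SelClosed s x) :
    q.SelClosed (s.filter (· ∈ q₀.V)) x := by
  have hx₀ := (hc.of_qLe hle hx).1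
  exact ⟨hc.1, fun i => Finset.mem_filter.2 ⟨hc.2 i, hle.2.2.2 i x hx₀ ▸ (hq₀.sel x hx₀).1 i⟩⟩

structure IsEmbOn [LinearOrder α] (q : QStruct n α) (s : Finset α) (H : NEStruct n)
    (f : α → ℕ) : Prop where
  strictMonoOn : StrictMonoOn f s
  mapsTo : ∀ x ∈ s, f x ∈ H.V
  sel : ∀ x ∈ s, q.SelClosed s x → f x ∈ H.U ∧ ∀ i, f (q.h i x) = H.h i (f x)
  adj : ∀ x ∈ s, ∀ y ∈ s, q.SelClosed s x → q.SelClosed s y →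
    (s(x, y) ∈ q.X ↔ s(f x, f y) ∈ H.X)

variable [LinearOrder α] {q q₀ q₁ : QStruct n α} {s t : Finset α} {H H' : NEStruct n}
  {f F : α → ℕ}

theorem isCond_iff {e : Fin (2 * n) → Bool} {lam : Cardinal.{0}} :
    IsCond n e lam q ↔ #q.V < lam ∧ q.WF ∧ ∀ s : Finset α, ↑s ⊆ q.V → FinEmbeds n e q s :=
  ⟨fun ⟨h₁, h₂, h₃, h₄, h₅, h₆⟩ => ⟨h₁, ⟨h₂, h₃, h₄, h₅⟩, h₆⟩,
    fun ⟨h₁, ⟨h₂, h₃, h₄, h₅⟩, h₆⟩ => ⟨h₁, h₂, h₃, h₄, h₅, h₆⟩⟩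

theorem finEmbeds_iff {e : Fin (2 * n) → Bool} :
    FinEmbeds n e q s ↔ ∃ H f, InK n e H ∧ q.IsEmbOn s H f :=
  ⟨fun ⟨H, f, hK, h₁, h₂, h₃, h₄⟩ => ⟨H, f, hK, h₁, h₂, h₃, h₄⟩,
    fun ⟨H, f, hK, h₁, h₂, h₃, h₄⟩ => ⟨H, f, hK, h₁, h₂, h₃, h₄⟩⟩

namespace IsEmbOn

theorem mono (h : q.IsEmbOn s H f) (hts : t ⊆ s) : q.IsEmbOn t H f where
  strictMonoOn := h.strictMonoOn.mono (Finset.coe_subset.2 hts)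
  mapsTo x hx := h.mapsTo x (hts hx)
  sel x hx hc := h.sel x (hts hx) ⟨hc.1, fun i => hts (hc.2 i)⟩
  adj x hx y hy hcx hcy :=
    h.adj x (hts hx) y (hts hy) ⟨hcx.1, fun i => hts (hcx.2 i)⟩ ⟨hcy.1, fun i => hts (hcy.2 i)⟩

theorem comp {φ : ℕ → ℕ} (h : q.IsEmbOn s H f) (hφ : NEStruct.IndEmb φ H H')
    (hF : ∀ x ∈ s, F x = φ (f x)) : q.IsEmbOn s H' F := by
  obtain ⟨hmaps, hmono, hU, hX, hh⟩ := hφ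
  refine ⟨fun x hx y hy hxy => ?_, fun x hx => ?_, fun x hx hc => ?_,
    fun x hx y hy hcx hcy => ?_⟩
  · rw [hF x hx, hF y hy]
    exact hmono (h.mapsTo x hx) (h.mapsTo y hy) (h.strictMonoOn hx hy hxy)
  · rw [hF x hx]
    exact hmaps (h.mapsTo x hx)
  · obtain ⟨hxU, hxh⟩ := h.sel x hx hc
    refine ⟨hF x hx ▸ (hU _ (h.mapsTo x hx)).1 hxU, fun i => ?_⟩
    rw [hF _ (hc.2 i), hF x hx, hxh i, hh i _ hxU]
  · rw [hF x hx, hF y hy, h.adj x hx y hy hcx hcy]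
    exact hX _ (h.sel x hx hcx).1 _ (h.sel y hy hcy).1

theorem of_qLe (hle : QLe q q₀) (hs : ↑s ⊆ q₀.V) (h : q₀.IsEmbOn s H f) : q.IsEmbOn s H f where
  strictMonoOn := h.strictMonoOn
  mapsTo := h.mapsTo
  sel x hx hc := by
    have hc₀ := hc.of_qLe hle (hs hx)
    simp only [hle.2.2.2 _ x hc₀.1]
    exact h.sel x hx hc₀
  adj x hx y hy hcx hcy := by
    rw [← h.adj x hx y hy (hcx.of_qLe hle (hs hx)) (hcy.of_qLe hle (hs hy)), hle.2.2.1]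
    simp [hs hx, hs hy]

open scoped Classical in
theorem glue (hle₀ : QLe q q₀) (hle₁ : QLe q q₁) (hq₀ : q₀.WF) (hq₁ : q₁.WF)
    (hX : ∀ ed ∈ q.X, (∀ v ∈ ed, v ∈ q₀.V) ∨ ∀ v ∈ ed, v ∈ q₁.V) (hs : ↑s ⊆ q₀.V ∪ q₁.V)
    (h₀ : q₀.IsEmbOn (s.filter (· ∈ q₀.V)) H F) (h₁ : q₁.IsEmbOn (s.filter (· ∈ q₁.V)) H F)
    (hcross : ∀ x ∈ s, x ∉ q₁.V → ∀ y ∈ s, y ∉ q₀.V → x < y ∧ F x < F y ∧ s(F x, F y) ∉ H.X) :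
    q.IsEmbOn s H F := by
  replace h₀ := h₀.of_qLe hle₀ fun x hx => (Finset.mem_filter.1 hx).2
  replace h₁ := h₁.of_qLe hle₁ fun x hx => (Finset.mem_filter.1 hx).2
  have hmem₀ : ∀ x ∈ s, x ∈ q₀.V → x ∈ s.filter (· ∈ q₀.V) :=
    fun x hx hx₀ => Finset.mem_filter.2 ⟨hx, hx₀⟩
  have hmem₁ : ∀ x ∈ s, x ∈ q₁.V → x ∈ s.filter (· ∈ q₁.V) :=
    fun x hx hx₁ => Finset.mem_filter.2 ⟨hx, hx₁⟩
  have hpair : ∀ x ∈ s, ∀ y ∈ s, (x ∈ q₀.V ∧ y ∈ q₀.V) ∨ (x ∈ q₁.V ∧ y ∈ q₁.V) ∨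
      (x ∉ q₁.V ∧ y ∉ q₀.V) ∨ (y ∉ q₁.V ∧ x ∉ q₀.V) := by
    intro x hx y hy
    have hx' := hs hx
    have hy' := hs hy
    rw [Set.mem_union] at hx' hy'
    tauto
  have hnotX : ∀ x ∈ s, x ∉ q₁.V → ∀ y ∈ s, y ∉ q₀.V → s(x, y) ∉ q.X :=
    fun x _ hx y _ hy hxy => (hX _ hxy).elim (fun h => hy (h y (Sym2.mem_mk_right x y)))
      fun h => hx (h x (Sym2.mem_mk_left x y))
  refine ⟨fun x hx y hy hxy => ?_, fun x hx => ?_, fun x hx hc => ?_,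
    fun x hx y hy hcx hcy => ?_⟩
  · rcases hpair x hx y hy with ⟨hx', hy'⟩ | ⟨hx', hy'⟩ | ⟨hx', hy'⟩ | ⟨hy', hx'⟩
    · exact h₀.strictMonoOn (hmem₀ x hx hx') (hmem₀ y hy hy') hxy
    · exact h₁.strictMonoOn (hmem₁ x hx hx') (hmem₁ y hy hy') hxy
    · exact (hcross x hx hx' y hy hy').2.1
    · exact absurd (hcross y hy hy' x hx hx').1 hxy.not_gt
  · rcases hs hx with hx' | hx'
    exacts [h₀.mapsTo x (hmem₀ x hx hx'), h₁.mapsTo x (hmem₁ x hx hx')]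
  · rcases hs hx with hx' | hx'
    exacts [h₀.sel x (hmem₀ x hx hx') (hc.filter hle₀ hq₀ hx'),
      h₁.sel x (hmem₁ x hx hx') (hc.filter hle₁ hq₁ hx')]
  · rcases hpair x hx y hy with ⟨hx', hy'⟩ | ⟨hx', hy'⟩ | ⟨hx', hy'⟩ | ⟨hy', hx'⟩
    · exact h₀.adj x (hmem₀ x hx hx') y (hmem₀ y hy hy') (hcx.filter hle₀ hq₀ hx')
        (hcy.filter hle₀ hq₀ hy')
    · exact h₁.adj x (hmem₁ x hx hx') y (hmem₁ y hy hy') (hcx.filter hle₁ hq₁ hx')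
        (hcy.filter hle₁ hq₁ hy')
    · exact iff_of_false (hnotX x hx hx' y hy hy') (hcross x hx hx' y hy hy').2.2
    · rw [Sym2.eq_swap, Sym2.eq_swap (a := F x)]
      exact iff_of_false (hnotX y hy hy' x hx hx') (hcross y hy hy' x hx hx').2.2

end IsEmbOn

structure IsIsoOn (q₀ q₁ : QStruct n α) (g : α → α) : Prop where
  strictMonoOn : StrictMonoOn g q₀.V
  image_eq : g '' q₀.V = q₁.V
  mem_U_iff : ∀ x ∈ q₀.V, x ∈ q₀.U ↔ g x ∈ q₁.U
  mem_X_iff : ∀ x ∈ q₀.U, ∀ y ∈ q₀.U, s(x, y) ∈ q₀.X ↔ s(g x, g y) ∈ q₁.X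
  h_comm : ∀ i, ∀ x ∈ q₀.U, g (q₀.h i x) = q₁.h i (g x)

theorem IsEmbOn.image_of_isIsoOn {g : α → α} (hg : q₀.IsIsoOn q₁ g) (hq₀ : q₀.WF)
    (ht : ↑t ⊆ q₀.V) (h : q₀.IsEmbOn t H f) (hF : ∀ x ∈ t, F (g x) = f x) :
    q₁.IsEmbOn (t.image g) H F := by
  have hclosed : ∀ x ∈ t, q₁.SelClosed (t.image g) (g x) → q₀.SelClosed t x := by
    rintro x hx ⟨hxU, hxh⟩
    have hx₀ : x ∈ q₀.U := (hg.mem_U_iff x (ht hx)).2 hxU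
    refine ⟨hx₀, fun i => ?_⟩
    obtain ⟨y, hy, hxy⟩ := Finset.mem_image.1 (hxh i)
    rw [← hg.h_comm i x hx₀] at hxy
    rwa [← hg.strictMonoOn.injOn (ht hy) ((hq₀.sel x hx₀).1 i) hxy]
  refine ⟨?_, Finset.forall_mem_image.2 fun x hx => ?_,
    Finset.forall_mem_image.2 fun x hx hc => ?_,
    Finset.forall_mem_image.2 fun x hx => Finset.forall_mem_image.2 fun y hy hcx hcy => ?_⟩
  · intro a ha b hb hab
    obtain ⟨x, hx, rfl⟩ := Finset.mem_image.1 ha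
    obtain ⟨y, hy, rfl⟩ := Finset.mem_image.1 hb
    rw [hF x hx, hF y hy]
    exact h.strictMonoOn hx hy ((hg.strictMonoOn.lt_iff_lt (ht hx) (ht hy)).1 hab)
  · rw [hF x hx]
    exact h.mapsTo x hx
  · have hc₀ := hclosed x hx hc
    obtain ⟨hxU, hxh⟩ := h.sel x hx hc₀
    refine ⟨hF x hx ▸ hxU, fun i => ?_⟩
    rw [← hg.h_comm i x hc₀.1, hF _ (hc₀.2 i), hF x hx, hxh i]
  · have hcx₀ := hclosed x hx hcx
    have hcy₀ := hclosed y hy hcy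
    rw [hF x hx, hF y hy, ← h.adj x hx y hy hcx₀ hcy₀, hg.mem_X_iff x hcx₀.1 y hcy₀.1]

structure IsCopyAbove (q₀ q₁ : QStruct n α) (g : α → α) (V V0 V1 : Set α) : Prop
    extends IsIsoOn q₀ q₁ g where
  V₀_eq : q₀.V = V ∪ V0
  V₁_eq : q₁.V = V ∪ V1
  V_lt_V0 : ∀ a ∈ V, ∀ b ∈ V0, a < b
  V0_lt_V1 : ∀ a ∈ V0, ∀ b ∈ V1, a < b
  apply_eq : ∀ v ∈ V, g v = v

namespace IsCopyAbove

variable {g : α → α} {V V0 V1 : Set α} {x : α}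

theorem subset_V₀ (hc : q₀.IsCopyAbove q₁ g V V0 V1) : V ⊆ q₀.V :=
  hc.V₀_eq ▸ Set.subset_union_left

theorem mem_V_of_mem (hc : q₀.IsCopyAbove q₁ g V V0 V1) (hx₀ : x ∈ q₀.V) (hx₁ : x ∈ q₁.V) :
    x ∈ V := by
  rw [hc.V₀_eq] at hx₀
  rw [hc.V₁_eq] at hx₁
  rcases hx₀ with hx | hx₀
  · exact hx
  · exact hx₁.resolve_right fun hx₁ => (hc.V0_lt_V1 x hx₀ x hx₁).false

theorem mem_V0_of_not_mem (hc : q₀.IsCopyAbove q₁ g V V0 V1) (hx₀ : x ∈ q₀.V)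
    (hx₁ : x ∉ q₁.V) : x ∈ V0 :=
  (hc.V₀_eq ▸ hx₀).resolve_left fun hx => hx₁ (hc.V₁_eq ▸ Or.inl hx)

theorem mem_V1_of_not_mem (hc : q₀.IsCopyAbove q₁ g V V0 V1) (hx₁ : x ∈ q₁.V)
    (hx₀ : x ∉ q₀.V) : x ∈ V1 :=
  (hc.V₁_eq ▸ hx₁).resolve_left fun hx => hx₀ (hc.subset_V₀ hx)

theorem mem_V_iff_apply_mem (hc : q₀.IsCopyAbove q₁ g V V0 V1) (hx : x ∈ q₀.V) :
    x ∈ V ↔ g x ∈ q₀.V := by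
  refine ⟨fun hxV => by rwa [hc.apply_eq x hxV], fun hgx => ?_⟩
  have hgxV := hc.mem_V_of_mem hgx (hc.image_eq ▸ Set.mem_image_of_mem g hx)
  have hgx_eq : g x = x := hc.strictMonoOn.injOn hgx hx (hc.apply_eq _ hgxV)
  exact hgx_eq ▸ hgxV

theorem mem_V0_of_apply_not_mem (hc : q₀.IsCopyAbove q₁ g V V0 V1) (hx : x ∈ q₀.V)
    (hgx : g x ∉ q₀.V) : x ∈ V0 :=
  (hc.V₀_eq ▸ hx).resolve_left fun hxV => hgx ((hc.mem_V_iff_apply_mem hx).1 hxV)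

theorem mem_U₀_iff_mem_U₁ (hc : q₀.IsCopyAbove q₁ g V V0 V1) (hx : x ∈ V) :
    x ∈ q₀.U ↔ x ∈ q₁.U := by
  simpa only [hc.apply_eq x hx] using hc.mem_U_iff x (hc.subset_V₀ hx)

theorem mem_X₀_iff_mem_X₁ (hc : q₀.IsCopyAbove q₁ g V V0 V1) {ed : Sym2 α}
    (hed : ∀ v ∈ ed, v ∈ V ∧ v ∈ q₀.U) : ed ∈ q₀.X ↔ ed ∈ q₁.X := by
  induction ed using Sym2.inductionOn with
  | hf a b =>
    obtain ⟨ha, haU⟩ := hed a (Sym2.mem_mk_left a b)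
    obtain ⟨hb, hbU⟩ := hed b (Sym2.mem_mk_right a b)
    simpa only [hc.apply_eq a ha, hc.apply_eq b hb] using hc.mem_X_iff a haU b hbU

theorem h_eq (hc : q₀.IsCopyAbove q₁ g V V0 V1) (hq₀ : q₀.WF) (hx : x ∈ V) (hxU : x ∈ q₀.U)
    (i : Fin n) : q₀.h i x = q₁.h i x := by
  obtain ⟨hmem, hmono, hlast⟩ := hq₀.sel x hxU
  have hle : q₀.h i x ≤ x := apply_le_of_apply_last hmono.monotone hlast i
  -- `q₀.h i x ≤ x` and `V < V0` keep the selector values in `V`, where `g` is the identity.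
  have hhV : q₀.h i x ∈ V :=
    (hc.V₀_eq ▸ hmem i).resolve_right fun h => (hc.V_lt_V0 x hx _ h).not_ge hle
  rw [← hc.apply_eq _ hhV, hc.h_comm i x hxU, hc.apply_eq x hx]

theorem qLe_union_left (hc : q₀.IsCopyAbove q₁ g V V0 V1) (hq₀ : q₀.WF) (hq₁ : q₁.WF) :
    QLe (q₀.union q₁) q₀ := by
  have hU : ∀ x ∈ q₁.U, x ∈ q₀.V → x ∈ q₀.U := fun x hx hx₀ =>
    (hc.mem_U₀_iff_mem_U₁ (hc.mem_V_of_mem hx₀ (hq₁.U_subset hx))).2 hx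
  refine QStruct.qLe_union_left hq₀ hU fun ed hed hed₀ =>
    (hc.mem_X₀_iff_mem_X₁ fun v hv => ?_).2 hed
  have hvU := hq₁.X_mem_U ed hed v hv
  exact ⟨hc.mem_V_of_mem (hed₀ v hv) (hq₁.U_subset hvU), hU v hvU (hed₀ v hv)⟩

theorem qLe_union_right (hc : q₀.IsCopyAbove q₁ g V V0 V1) (hq₀ : q₀.WF) (hq₁ : q₁.WF) :
    QLe (q₀.union q₁) q₁ := by
  have hV : ∀ x ∈ q₀.U, x ∈ q₁.V → x ∈ V := fun x hx hx₁ =>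
    hc.mem_V_of_mem (hq₀.U_subset hx) hx₁
  refine QStruct.qLe_union_right hq₁ (fun x hx hx₁ => (hc.mem_U₀_iff_mem_U₁ (hV x hx hx₁)).1 hx)
    (fun ed hed hed₁ => (hc.mem_X₀_iff_mem_X₁ fun v hv => ?_).1 hed)
    fun x hx hx₁ => hc.h_eq hq₀ (hV x hx (hq₁.U_subset hx₁)) hx
  have hvU := hq₀.X_mem_U ed hed v hv
  exact ⟨hV v hvU (hed₁ v hv), hvU⟩

open scoped Classical in
theorem isEmbOn_union_amalg (hc : q₀.IsCopyAbove q₁ g V V0 V1) (hq₀ : q₀.WF) (hq₁ : q₁.WF)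
    (hH : H.SelBelow) (hs : ↑s ⊆ q₀.V ∪ q₁.V) (ht : ↑t ⊆ q₀.V)
    (hts : t.image g = s.filter (· ∈ q₁.V)) {c : ℕ}
    (hf : q₀.IsEmbOn (s.filter (· ∈ q₀.V) ∪ t) H f)
    (hge : ∀ x ∈ s.filter (· ∈ q₀.V) ∪ t, x ∈ V0 → c ≤ f x)
    (hF₀ : ∀ x ∈ s, x ∈ q₀.V → F x = 3 * f x)
    (hF₁ : ∀ x ∈ t, F (g x) = H.amalgRight c (f x)) :
    (q₀.union q₁).IsEmbOn s (H.amalg c) F := by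
  refine IsEmbOn.glue (hc.qLe_union_left hq₀ hq₁) (hc.qLe_union_right hq₀ hq₁) hq₀ hq₁
    (fun ed hed => hed.imp (hq₀.X_mem_V ed) (hq₁.X_mem_V ed)) hs
    ((hf.mono Finset.subset_union_left).comp NEStruct.indEmb_amalg_left fun x hx =>
      hF₀ x (Finset.mem_filter.1 hx).1 (Finset.mem_filter.1 hx).2)
    (hts ▸ ((hf.mono Finset.subset_union_right).comp (NEStruct.indEmb_amalg_right hH)
      fun _ _ => rfl).image_of_isIsoOn hc.toIsIsoOn hq₀ ht hF₁)
    fun x hx hx₁ y hy hy₀ => ?_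
  have hx₀ : x ∈ q₀.V := (hs hx).resolve_right hx₁
  have hy : y ∈ t.image g := hts ▸ Finset.mem_filter.2 ⟨hy, (hs hy).resolve_left hy₀⟩
  obtain ⟨z, hz, rfl⟩ := Finset.mem_image.1 hy
  have hxs : x ∈ s.filter (· ∈ q₀.V) ∪ t := Finset.mem_union_left _ (Finset.mem_filter.2 ⟨hx, hx₀⟩)
  have hxV0 := hc.mem_V0_of_not_mem hx₀ hx₁
  have hcx : c ≤ f x := hge x hxs hxV0
  have hcz : c ≤ f z := hge z (Finset.mem_union_right _ hz) (hc.mem_V0_of_apply_not_mem (ht hz) hy₀)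
  have hfx : f x ≤ H.V.sup id := Finset.le_sup (f := id) (hf.mapsTo x hxs)
  have hgz₁ : g z ∈ q₁.V := hc.image_eq ▸ Set.mem_image_of_mem g (ht hz)
  rw [hF₀ x hx hx₀, hF₁ z hz]
  refine ⟨hc.V0_lt_V1 x hxV0 _ (hc.mem_V1_of_not_mem hgz₁ hy₀), ?_, NEStruct.amalg_X_cross hcx hcz⟩
  rw [NEStruct.amalgRight_of_le hcz]
  omega

open scoped Classical in
theorem finEmbeds_union {e : Fin (2 * n) → Bool} (hc : q₀.IsCopyAbove q₁ g V V0 V1)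
    (hq₀ : q₀.WF) (hq₁ : q₁.WF) (hfin₀ : ∀ s : Finset α, ↑s ⊆ q₀.V → FinEmbeds n e q₀ s)
    (hs : ↑s ⊆ q₀.V ∪ q₁.V) : FinEmbeds n e (q₀.union q₁) s := by
  obtain ⟨t, ht, hts⟩ : ∃ t : Finset α, ↑t ⊆ q₀.V ∧ t.image g = s.filter (· ∈ q₁.V) :=
    Finset.subset_set_image_iff.1 fun x hx => hc.image_eq ▸ (Finset.mem_filter.1 hx).2
  set s' := s.filter (· ∈ q₀.V) ∪ t
  have hs' : ↑s' ⊆ q₀.V := by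
    rw [Finset.coe_union]
    exact Set.union_subset (fun x hx => (Finset.mem_filter.1 hx).2) ht
  obtain ⟨H, f, hK, hf⟩ := finEmbeds_iff.1 (hfin₀ s' hs')
  by_cases hne : (s'.filter (· ∈ V0)).Nonempty
  · -- Amalgamate `H` with itself over `f m`, the first point of `s'` in `V0`.
    obtain ⟨m, hm, hmin⟩ := (s'.filter (· ∈ V0)).exists_min_image f hne
    rw [Finset.mem_filter] at hm
    have : Nonempty α := ⟨m⟩
    refine finEmbeds_iff.2 ⟨H.amalg (f m), fun y => if y ∈ q₀.V then 3 * f y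
      else H.amalgRight (f m) (f (Function.invFunOn g q₀.V y)), hK.amalg (hf.mapsTo m hm.1),
      hc.isEmbOn_union_amalg hq₀ hq₁ hK.selBelow hs ht hts hf
        (fun x hx hxV0 => hmin x (Finset.mem_filter.2 ⟨hx, hxV0⟩)) (fun x _ hx => if_pos hx)
        fun x hx => ?_⟩
    by_cases hgx : g x ∈ q₀.V
    · have hxV := (hc.mem_V_iff_apply_mem (ht hx)).2 hgx
      have hxs' : x ∈ s' := Finset.mem_union_right _ hx
      rw [if_pos hgx, hc.apply_eq x hxV, NEStruct.amalgRight_of_lt (hf.mapsTo x hxs')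
        (hf.strictMonoOn hxs' hm.1 (hc.V_lt_V0 x hxV m hm.2))]
    · rw [if_neg hgx, hc.strictMonoOn.injOn.leftInvOn_invFunOn (ht hx)]
  · have hss : s ⊆ s' := by
      intro x hx
      by_cases hx₀ : x ∈ q₀.V
      · exact Finset.mem_union_left _ (Finset.mem_filter.2 ⟨hx, hx₀⟩)
      · have hx : x ∈ t.image g := hts ▸ Finset.mem_filter.2 ⟨hx, (hs hx).resolve_left hx₀⟩
        obtain ⟨z, hz, rfl⟩ := Finset.mem_image.1 hx
        exact absurd ⟨z, Finset.mem_filter.2 ⟨Finset.mem_union_right _ hz,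
          hc.mem_V0_of_apply_not_mem (ht hz) hx₀⟩⟩ hne
    exact finEmbeds_iff.2 ⟨H, f, hK,
      (hf.mono hss).of_qLe (hc.qLe_union_left hq₀ hq₁) fun x hx => hs' (hss hx)⟩

end IsCopyAbove

end QStruct

open scoped Classical in
theorem statement12_general (n : ℕ) (e : Fin (2 * n) → Bool)
    (lam : Cardinal.{0}) (hinf : ℵ₀ ≤ lam)
    (q₀ q₁ : QStruct n ((Order.succ lam).ord).ToType)
    (hq₀ : IsCond n e lam q₀) (hq₁ : IsCond n e lam q₁)
    (V V0 V1 : Set ((Order.succ lam).ord).ToType)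
    (hV₀ : q₀.V = V ∪ V0) (hV₁ : q₁.V = V ∪ V1)
    (hVV0 : ∀ a ∈ V, ∀ b ∈ V0, a < b)
    (hV0V1 : ∀ a ∈ V0, ∀ b ∈ V1, a < b)
    (g : ((Order.succ lam).ord).ToType → ((Order.succ lam).ord).ToType)
    (hgmono : StrictMonoOn g q₀.V) (hgV : g '' q₀.V = q₁.V)
    (hgfix : ∀ v ∈ V, g v = v)
    (hgU : ∀ x ∈ q₀.V, (x ∈ q₀.U ↔ g x ∈ q₁.U))
    (hgX : ∀ x ∈ q₀.U, ∀ y ∈ q₀.U, (s(x, y) ∈ q₀.X ↔ s(g x, g y) ∈ q₁.X))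
    (hgh : ∀ i, ∀ x ∈ q₀.U, g (q₀.h i x) = q₁.h i (g x)) :
    IsCond n e lam
      (⟨q₀.V ∪ q₁.V, q₀.U ∪ q₁.U, q₀.X ∪ q₁.X,
        fun i x => if x ∈ q₀.U then q₀.h i x else q₁.h i x⟩ : QStruct n _) ∧
    QLe (⟨q₀.V ∪ q₁.V, q₀.U ∪ q₁.U, q₀.X ∪ q₁.X,
        fun i x => if x ∈ q₀.U then q₀.h i x else q₁.h i x⟩ : QStruct n _) q₀ ∧
    QLe (⟨q₀.V ∪ q₁.V, q₀.U ∪ q₁.U, q₀.X ∪ q₁.X,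
        fun i x => if x ∈ q₀.U then q₀.h i x else q₁.h i x⟩ : QStruct n _) q₁ := by
  have hc : q₀.IsCopyAbove q₁ g V V0 V1 :=
    ⟨⟨hgmono, hgV, hgU, hgX, hgh⟩, hV₀, hV₁, hVV0, hV0V1, hgfix⟩
  obtain ⟨hcard₀, hwf₀, hfin₀⟩ := QStruct.isCond_iff.1 hq₀
  obtain ⟨hcard₁, hwf₁, -⟩ := QStruct.isCond_iff.1 hq₁
  have hcard : #(q₀.V ∪ q₁.V : Set _) < lam :=
    (mk_union_le _ _).trans_lt (add_lt_of_lt hinf hcard₀ hcard₁)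
  exact ⟨QStruct.isCond_iff.2 ⟨hcard, hwf₀.union hwf₁,
      fun s hs => hc.finEmbeds_union hwf₀ hwf₁ hfin₀ hs⟩,
    hc.qLe_union_left hwf₀ hwf₁, hc.qLe_union_right hwf₀ hwf₁⟩

open scoped Classical in
/-- Lemma 7, key step: if `q₀`, `q₁` are conditions of `Q` with vertex sets
`V ∪ V⁰`, `V ∪ V¹` where `V < V⁰ < V¹`, which are isomorphic via the (unique) order
isomorphism `g` fixing `V`, then `q₀` and `q₁` are compatible: their coordinatewise union
is a condition extending both. -/
theorem statement12 (n : ℕ) (hn : 1 ≤ n) (e : Fin (2 * n) → Bool)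
    (he : (Finset.univ.filter (fun i => e i = false)).card = n)
    (lam : Cardinal.{0}) (hinf : ℵ₀ ≤ lam) (hpow : lam ^< lam = lam)
    (q₀ q₁ : QStruct n ((Order.succ lam).ord).ToType)
    (hq₀ : IsCond n e lam q₀) (hq₁ : IsCond n e lam q₁)
    (V V0 V1 : Set ((Order.succ lam).ord).ToType)
    (hV₀ : q₀.V = V ∪ V0) (hV₁ : q₁.V = V ∪ V1)
    (hVV0 : ∀ a ∈ V, ∀ b ∈ V0, a < b)
    (hV0V1 : ∀ a ∈ V0, ∀ b ∈ V1, a < b)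
    (hVV1 : ∀ a ∈ V, ∀ b ∈ V1, a < b)
    (g : ((Order.succ lam).ord).ToType → ((Order.succ lam).ord).ToType)
    (hgmono : StrictMonoOn g q₀.V) (hgV : g '' q₀.V = q₁.V)
    (hgfix : ∀ v ∈ V, g v = v)
    (hgU : ∀ x ∈ q₀.V, (x ∈ q₀.U ↔ g x ∈ q₁.U))
    (hgX : ∀ x ∈ q₀.U, ∀ y ∈ q₀.U, (s(x, y) ∈ q₀.X ↔ s(g x, g y) ∈ q₁.X))
    (hgh : ∀ i, ∀ x ∈ q₀.U, g (q₀.h i x) = q₁.h i (g x)) :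
    IsCond n e lam
      (⟨q₀.V ∪ q₁.V, q₀.U ∪ q₁.U, q₀.X ∪ q₁.X,
        fun i x => if x ∈ q₀.U then q₀.h i x else q₁.h i x⟩ : QStruct n _) ∧
    QLe (⟨q₀.V ∪ q₁.V, q₀.U ∪ q₁.U, q₀.X ∪ q₁.X,
        fun i x => if x ∈ q₀.U then q₀.h i x else q₁.h i x⟩ : QStruct n _) q₀ ∧
    QLe (⟨q₀.V ∪ q₁.V, q₀.U ∪ q₁.U, q₀.X ∪ q₁.X,
        fun i x => if x ∈ q₀.U then q₀.h i x else q₁.h i x⟩ : QStruct n _) q₁ :=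
  statement12_general n e lam hinf q₀ q₁ hq₀ hq₁ V V0 V1 hV₀ hV₁ hVV0 hV0V1 g hgmono hgV hgfix hgU
    hgX hgh
end
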